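/- arXiv:1508.06781 — 11 statements merged into one kernel-verified Lean document; each statement's English description precedes it below -/
import Mathlib

section
/- There exists an instance with 4 agents and 2 projects whose valuations are monotone and subadditive but which admits no core stable solution. Concretely, let 𝒩 = {1,2,3,4}, and define v_1(∅)=0, v_1(S)=2 for every nonempty proper subset S ⊊ 𝒩, v_1(𝒩)=4, and v_2(∅)=0, v_2(S)=3/2 for every nonempty S ⊆ 𝒩. Then v_1 and v_2 are monotone and subadditive, and there is no allocation S together with a payment vector p such that (S, p) is core stable. -/
/-!
Stability of project 1 against the grand coalition forces the total payment to be at least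
`v₁ 𝒩 = 4`. As `v₂ ≤ 3/2` everywhere and `v₁ ≤ 2` off `𝒩`, budget balance then forces
`S₁ = 𝒩`, `S₂ = ∅` and a total payment of exactly `4`. But with `S₂ = ∅`, stability of project 2
against each singleton forces every agent to be paid at least `3/2`, so the total is at least `6`.
-/

/-- The valuation of project 1: `v₁ ∅ = 0`, `v₁ 𝒩 = 4`, `v₁ S = 2` otherwise. -/
noncomputable def v1 : Finset (Fin 4) → ℝ :=
  fun S => if S = ∅ then 0 else if S = Finset.univ then 4 else 2

/-- The valuation of project 2: `v₂ ∅ = 0`, `v₂ S = 3/2` otherwise. -/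
noncomputable def v2 : Finset (Fin 4) → ℝ :=
  fun S => if S = ∅ then 0 else 3 / 2

open Finset

lemma le_sum_of_forall_le_sum_union {α : Type*} [Fintype α] [DecidableEq α]
    (v : Finset α → ℝ) (S : Finset α) (p : α → ℝ)
    (hstab : ∀ T, v (S ∪ T) ≤ ∑ i ∈ S ∪ T, p i) : v univ ≤ ∑ i, p i := by
  simpa only [union_eq_right.2 (subset_univ S)] using hstab univ

section Valuations

variable {A : Finset (Fin 4)}

lemma v1_empty : v1 ∅ = 0 := by simp [v1]

lemma v1_univ : v1 univ = 4 := by simp [v1, univ_nonempty.ne_empty]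

lemma v1_nonneg (A : Finset (Fin 4)) : 0 ≤ v1 A := by
  unfold v1; split_ifs <;> norm_num

lemma v1_le_four (A : Finset (Fin 4)) : v1 A ≤ 4 := by
  unfold v1; split_ifs <;> norm_num

lemma v1_le_two (hA : A ≠ univ) : v1 A ≤ 2 := by
  unfold v1; split_ifs <;> norm_num

lemma two_le_v1 (hA : A.Nonempty) : 2 ≤ v1 A := by
  simp only [v1, hA.ne_empty, if_false]; split_ifs <;> norm_num

lemma v2_empty : v2 ∅ = 0 := by simp [v2]

lemma v2_of_nonempty (hA : A.Nonempty) : v2 A = 3 / 2 := by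
  simp [v2, hA.ne_empty]

lemma v2_nonneg (A : Finset (Fin 4)) : 0 ≤ v2 A := by
  unfold v2; split_ifs <;> norm_num

lemma v2_le_three_halves (A : Finset (Fin 4)) : v2 A ≤ 3 / 2 := by
  unfold v2; split_ifs <;> norm_num

lemma monotone_v1 : Monotone v1 := by
  intro A B hAB
  by_cases hB : B = univ
  · simpa only [hB, v1_univ] using v1_le_four A
  have hA : A ≠ univ := fun h => hB (univ_subset_iff.mp (h ▸ hAB))
  rcases A.eq_empty_or_nonempty with rfl | hA'
  · simpa only [v1_empty] using v1_nonneg B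
  · exact (v1_le_two hA).trans (two_le_v1 (hA'.mono hAB))

lemma v1_union_le (A B : Finset (Fin 4)) : v1 (A ∪ B) ≤ v1 A + v1 B := by
  rcases A.eq_empty_or_nonempty with rfl | hA
  · simp [v1_empty]
  rcases B.eq_empty_or_nonempty with rfl | hB
  · simp [v1_empty]
  linarith [v1_le_four (A ∪ B), two_le_v1 hA, two_le_v1 hB]

lemma monotone_v2 : Monotone v2 := by
  intro A B hAB
  rcases A.eq_empty_or_nonempty with rfl | hA
  · simpa only [v2_empty] using v2_nonneg B
  · rw [v2_of_nonempty hA, v2_of_nonempty (hA.mono hAB)]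

lemma v2_union_le (A B : Finset (Fin 4)) : v2 (A ∪ B) ≤ v2 A + v2 B := by
  rcases A.eq_empty_or_nonempty with rfl | hA
  · simp [v2_empty]
  linarith [v2_le_three_halves (A ∪ B), v2_of_nonempty hA, v2_nonneg B]

end Valuations

theorem not_stable_of_budget_balanced (S : Fin 2 → Finset (Fin 4)) (p : Fin 4 → ℝ)
    (hdisj : Disjoint (S 0) (S 1))
    (hstab : ∀ (k : Fin 2) (T : Finset (Fin 4)), ![v1, v2] k (S k ∪ T) ≤ ∑ i ∈ S k ∪ T, p i)
    (hbb : ∑ i, p i = v1 (S 0) + v2 (S 1)) : False := by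
  have hfour : 4 ≤ ∑ i, p i := v1_univ ▸ le_sum_of_forall_le_sum_union v1 (S 0) p (hstab 0)
  have hS0 : S 0 = univ := by
    by_contra hne
    linarith [v1_le_two hne, v2_le_three_halves (S 1)]
  have hS1 : S 1 = ∅ := by rw [hS0] at hdisj; exact top_disjoint.mp hdisj
  have htotal : ∑ i, p i = 4 := by rw [hbb, hS0, hS1, v1_univ, v2_empty, add_zero]
  have hp : ∀ i, 3 / 2 ≤ p i := fun i => by
    simpa [hS1, v2_of_nonempty (singleton_nonempty i)] using hstab 1 {i}
  have hsix : 6 ≤ ∑ i, p i := calc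
    (6 : ℝ) = ∑ _i : Fin 4, 3 / 2 := by norm_num
    _ ≤ ∑ i, p i := sum_le_sum fun i _ => hp i
  linarith

/-- The instance with agents `Fin 4` and the two projects with valuations `v1`, `v2`
has monotone subadditive valuations but admits no core stable solution. -/
theorem stmt0 :
    (∀ A B : Finset (Fin 4), A ⊆ B → v1 A ≤ v1 B) ∧
    (∀ A B : Finset (Fin 4), v1 (A ∪ B) ≤ v1 A + v1 B) ∧
    (∀ A B : Finset (Fin 4), A ⊆ B → v2 A ≤ v2 B) ∧
    (∀ A B : Finset (Fin 4), v2 (A ∪ B) ≤ v2 A + v2 B) ∧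
    ¬ ∃ (S : Fin 2 → Finset (Fin 4)) (p : Fin 4 → ℝ),
        -- S is an allocation
        (∀ k l, k ≠ l → Disjoint (S k) (S l)) ∧
        Finset.univ.biUnion S = Finset.univ ∧
        -- p is a payment vector
        (∀ i, 0 ≤ p i) ∧
        -- stability
        (∀ (k : Fin 2) (T : Finset (Fin 4)),
          ![v1, v2] k (S k ∪ T) ≤ ∑ i ∈ S k ∪ T, p i) ∧
        -- budget balance
        (∑ i, p i = ∑ k, ![v1, v2] k (S k)) := by
  refine ⟨fun _ _ h => monotone_v1 h, v1_union_le, fun _ _ h => monotone_v2 h, v2_union_le, ?_⟩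
  rintro ⟨S, p, hdisj, -, -, hstab, hbb⟩
  refine not_stable_of_budget_balanced S p (hdisj 0 1 (by decide)) hstab ?_
  simpa only [Fin.sum_univ_two, Matrix.cons_val_zero, Matrix.cons_val_one] using hbb
end

section
/- For every instance in which each project valuation v_k is monotone and submodular (with v_k(∅)=0), there exists an allocation S and a payment vector p such that (S, p) is core stable and SW(S) ≥ OPT/2, i.e., a (1,2)-core stable solution exists. -/
/-!
Run the greedy algorithm: agents arrive one at a time, each joins a project where its marginal
value is largest and pays exactly that marginal value. A project's payments telescope to its
value, which gives budget balance. By submodularity the marginal value of an agent for a final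
coalition is at most the marginal value it saw when it was placed, hence at most its payment;
adding up marginal values along any `T` gives stability. Stability alone yields the factor `2`:
for any allocation `S'`, `v_k(S'_k) ≤ v_k(S_k ∪ S'_k) ≤ p(S_k) + p(S'_k)`, and summing over `k`
counts every payment twice.
-/

open Finset

section SetFunction

variable {α : Type*} [DecidableEq α]

theorem le_add_sum_marginal_of_submodular (f : Finset α → ℝ)
    (hf : ∀ (A B : Finset α) (i : α), A ⊆ B → f (insert i B) - f B ≤ f (insert i A) - f A)
    (A T : Finset α) :
    f (A ∪ T) ≤ f A + ∑ i ∈ T \ A, (f (insert i A) - f A) := by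
  induction T using Finset.induction_on with
  | empty => simp
  | @insert j T hjT ih =>
    by_cases hjA : j ∈ A
    · rwa [union_insert, insert_eq_of_mem (mem_union_left T hjA), insert_sdiff_of_mem T hjA]
    · have hj : j ∉ T \ A := fun h => hjT (mem_sdiff.mp h).1
      have := hf A (A ∪ T) j subset_union_left
      rw [union_insert, insert_sdiff_of_notMem T hjA, sum_insert hj]
      linarith

theorem le_sum_union_of_marginal_le_of_submodular (f : Finset α → ℝ)
    (hf : ∀ (A B : Finset α) (i : α), A ⊆ B → f (insert i B) - f B ≤ f (insert i A) - f A)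
    {A : Finset α} {p : α → ℝ} (hA : ∑ i ∈ A, p i = f A)
    (hp : ∀ i, f (insert i A) - f A ≤ p i) (T : Finset α) :
    f (A ∪ T) ≤ ∑ i ∈ A ∪ T, p i :=
  calc f (A ∪ T) ≤ f A + ∑ i ∈ T \ A, (f (insert i A) - f A) :=
        le_add_sum_marginal_of_submodular f hf A T
    _ ≤ ∑ i ∈ A, p i + ∑ i ∈ T \ A, p i := by
        rw [hA]; gcongr with i; exact hp i
    _ = ∑ i ∈ A ∪ T, p i := by
        rw [← sum_union disjoint_sdiff, union_sdiff_self_eq_union]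

end SetFunction

section Allocation

variable {𝒩 P : Type*} [DecidableEq 𝒩] [Fintype P]

theorem sum_sum_eq_sum_of_partition {S : P → Finset 𝒩}
    (hdisj : ∀ k l, k ≠ l → Disjoint (S k) (S l)) (p : 𝒩 → ℝ) :
    ∑ k, ∑ i ∈ S k, p i = ∑ i ∈ univ.biUnion S, p i :=
  (sum_biUnion fun k _ l _ hkl => hdisj k l hkl).symm

theorem sum_le_two_mul_sum_of_stable [Fintype 𝒩] (v : P → Finset 𝒩 → ℝ)
    (hmono : ∀ k (A B : Finset 𝒩), A ⊆ B → v k A ≤ v k B)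
    {S S' : P → Finset 𝒩} {p : 𝒩 → ℝ} (hp : ∀ i, 0 ≤ p i)
    (hstab : ∀ k (T : Finset 𝒩), v k (S k ∪ T) ≤ ∑ i ∈ S k ∪ T, p i)
    (hdisj : ∀ k l, k ≠ l → Disjoint (S k) (S l)) (hcover : univ.biUnion S = univ)
    (hdisj' : ∀ k l, k ≠ l → Disjoint (S' k) (S' l)) (hcover' : univ.biUnion S' = univ) :
    ∑ k, v k (S' k) ≤ 2 * ∑ i, p i := by
  have hk : ∀ k, v k (S' k) ≤ ∑ i ∈ S k, p i + ∑ i ∈ S' k, p i := fun k =>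
    calc v k (S' k) ≤ v k (S k ∪ S' k) := hmono k _ _ subset_union_right
      _ ≤ ∑ i ∈ S k ∪ S' k, p i := hstab k (S' k)
      _ ≤ ∑ i ∈ S k ∪ S' k, p i + ∑ i ∈ S k ∩ S' k, p i :=
          le_add_of_nonneg_right (sum_nonneg fun i _ => hp i)
      _ = ∑ i ∈ S k, p i + ∑ i ∈ S' k, p i := sum_union_inter
  calc ∑ k, v k (S' k) ≤ ∑ k, (∑ i ∈ S k, p i + ∑ i ∈ S' k, p i) := sum_le_sum fun k _ => hk k
    _ = 2 * ∑ i, p i := by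
      rw [sum_add_distrib, sum_sum_eq_sum_of_partition hdisj, sum_sum_eq_sum_of_partition hdisj',
        hcover, hcover', two_mul]

theorem biUnion_update_insert [DecidableEq P] (S : P → Finset 𝒩) (k₀ : P) (j : 𝒩) :
    univ.biUnion (Function.update S k₀ (insert j (S k₀))) = insert j (univ.biUnion S) := by
  ext i
  simp only [mem_biUnion, mem_univ, true_and, mem_insert, Function.update_apply]
  constructor
  · rintro ⟨k, hk⟩
    split_ifs at hk
    · exact (mem_insert.mp hk).imp_right fun h => ⟨k₀, h⟩
    · exact .inr ⟨k, hk⟩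
  · rintro (rfl | ⟨k, hk⟩)
    · exact ⟨k₀, by simp⟩
    · refine ⟨k, ?_⟩
      split_ifs with h
      · exact mem_insert_of_mem (h ▸ hk)
      · exact hk

end Allocation

section Greedy

variable {𝒩 P : Type*} [DecidableEq 𝒩] [Fintype P] (v : P → Finset 𝒩 → ℝ)

structure GreedyInvariant (A : Finset 𝒩) (S : P → Finset 𝒩) (p : 𝒩 → ℝ) : Prop where
  disjoint : ∀ k l, k ≠ l → Disjoint (S k) (S l)
  biUnion_eq : univ.biUnion S = A
  nonneg : ∀ i, 0 ≤ p i
  sum_eq : ∀ k, ∑ i ∈ S k, p i = v k (S k)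
  marginal_le : ∀ k, ∀ i ∈ A, v k (insert i (S k)) - v k (S k) ≤ p i

variable {v}

theorem GreedyInvariant.empty (hzero : ∀ k, v k ∅ = 0) :
    GreedyInvariant v ∅ (fun _ => ∅) 0 where
  disjoint _ _ _ := disjoint_empty_left _
  biUnion_eq := by ext; simp
  nonneg _ := le_rfl
  sum_eq k := by simp [hzero]
  marginal_le _ _ h := absurd h (notMem_empty _)

theorem GreedyInvariant.assign [DecidableEq P]
    (hmono : ∀ k (A B : Finset 𝒩), A ⊆ B → v k A ≤ v k B)
    (hsubmod : ∀ k (A B : Finset 𝒩) (i : 𝒩), A ⊆ B →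
      v k (insert i B) - v k B ≤ v k (insert i A) - v k A)
    {A : Finset 𝒩} {S : P → Finset 𝒩} {p : 𝒩 → ℝ} (h : GreedyInvariant v A S p)
    {j : 𝒩} (hj : j ∉ A) {k₀ : P}
    (hk₀ : ∀ k, v k (insert j (S k)) - v k (S k) ≤ v k₀ (insert j (S k₀)) - v k₀ (S k₀)) :
    GreedyInvariant v (insert j A) (Function.update S k₀ (insert j (S k₀)))
      (Function.update p j (v k₀ (insert j (S k₀)) - v k₀ (S k₀))) := by
  have hjS : ∀ k, j ∉ S k := fun k hk =>
    hj (h.biUnion_eq ▸ subset_biUnion_of_mem S (mem_univ k) hk)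
  have hSS' : ∀ k, S k ⊆ Function.update S k₀ (insert j (S k₀)) k := fun k => by
    rcases eq_or_ne k k₀ with rfl | hk
    · simp [subset_insert]
    · simp [hk]
  have hpay : 0 ≤ v k₀ (insert j (S k₀)) - v k₀ (S k₀) :=
    sub_nonneg.mpr (hmono k₀ _ _ (subset_insert j _))
  refine ⟨fun k l hkl => ?_, ?_, fun i => ?_, fun k => ?_, fun k i hi => ?_⟩
  · rcases eq_or_ne k k₀ with rfl | hk
    · simpa [hkl.symm, hjS l] using h.disjoint k l hkl
    · rcases eq_or_ne l k₀ with rfl | hl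
      · simpa [hk, hjS k] using h.disjoint k l hkl
      · simpa [hk, hl] using h.disjoint k l hkl
  · rw [biUnion_update_insert, h.biUnion_eq]
  · rcases eq_or_ne i j with rfl | hij
    · simpa using hpay
    · simpa [hij] using h.nonneg i
  · rcases eq_or_ne k k₀ with rfl | hk
    · rw [Function.update_self, sum_insert (hjS k), Function.update_self,
        sum_update_of_notMem (hjS k), h.sum_eq k, sub_add_cancel]
    · rw [Function.update_of_ne hk, sum_update_of_notMem (hjS k), h.sum_eq k]
  · rcases mem_insert.mp hi with rfl | hiA
    · rw [Function.update_self]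
      rcases eq_or_ne k k₀ with rfl | hk
      · simpa using hpay
      · simpa [hk] using hk₀ k
    · have hij : i ≠ j := fun hij => hj (hij ▸ hiA)
      rw [Function.update_of_ne hij]
      exact (hsubmod k _ _ i (hSS' k)).trans (h.marginal_le k i hiA)

theorem exists_greedyInvariant [DecidableEq P] [Nonempty P] (hzero : ∀ k, v k ∅ = 0)
    (hmono : ∀ k (A B : Finset 𝒩), A ⊆ B → v k A ≤ v k B)
    (hsubmod : ∀ k (A B : Finset 𝒩) (i : 𝒩), A ⊆ B →
      v k (insert i B) - v k B ≤ v k (insert i A) - v k A)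
    (A : Finset 𝒩) : ∃ S p, GreedyInvariant v A S p := by
  induction A using Finset.induction_on with
  | empty => exact ⟨_, _, .empty hzero⟩
  | @insert j A hj ih =>
    obtain ⟨S, p, h⟩ := ih
    obtain ⟨k₀, -, hk₀⟩ := exists_max_image univ (fun k => v k (insert j (S k)) - v k (S k))
      univ_nonempty
    exact ⟨_, _, h.assign hmono hsubmod hj fun k => hk₀ k (mem_univ k)⟩

theorem GreedyInvariant.stable
    (hsubmod : ∀ k (A B : Finset 𝒩) (i : 𝒩), A ⊆ B →
      v k (insert i B) - v k B ≤ v k (insert i A) - v k A)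
    [Fintype 𝒩] {S : P → Finset 𝒩} {p : 𝒩 → ℝ} (h : GreedyInvariant v univ S p)
    (k : P) (T : Finset 𝒩) :
    v k (S k ∪ T) ≤ ∑ i ∈ S k ∪ T, p i :=
  le_sum_union_of_marginal_le_of_submodular (v k) (hsubmod k) (h.sum_eq k)
    (fun i => h.marginal_le k i (mem_univ i)) T

theorem GreedyInvariant.sum_eq_sum {A : Finset 𝒩} {S : P → Finset 𝒩} {p : 𝒩 → ℝ}
    (h : GreedyInvariant v A S p) : ∑ i ∈ A, p i = ∑ k, v k (S k) := by
  rw [← h.biUnion_eq, ← sum_sum_eq_sum_of_partition h.disjoint]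
  exact sum_congr rfl fun k _ => h.sum_eq k

end Greedy

theorem stmt1_general {𝒩 P : Type*} [Fintype 𝒩] [DecidableEq 𝒩] [Fintype P] [Nonempty P]
    (v : P → Finset 𝒩 → ℝ)
    (hzero : ∀ k, v k ∅ = 0)
    (hmono : ∀ k (A B : Finset 𝒩), A ⊆ B → v k A ≤ v k B)
    (hsubmod : ∀ k (A B : Finset 𝒩) (i : 𝒩), A ⊆ B →
      v k (insert i B) - v k B ≤ v k (insert i A) - v k A) :
    ∃ (S : P → Finset 𝒩) (p : 𝒩 → ℝ),
      -- S is an allocation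
      (∀ k l, k ≠ l → Disjoint (S k) (S l)) ∧
      Finset.univ.biUnion S = Finset.univ ∧
      -- p is a payment vector
      (∀ i, 0 ≤ p i) ∧
      -- stability
      (∀ k (T : Finset 𝒩), v k (S k ∪ T) ≤ ∑ i ∈ S k ∪ T, p i) ∧
      -- budget balance
      (∑ i, p i = ∑ k, v k (S k)) ∧
      -- SW(S) ≥ OPT / 2
      (∀ S' : P → Finset 𝒩,
        (∀ k l, k ≠ l → Disjoint (S' k) (S' l)) →
        Finset.univ.biUnion S' = Finset.univ →
        ∑ k, v k (S' k) ≤ 2 * ∑ k, v k (S k)) := by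
  classical
  obtain ⟨S, p, h⟩ := exists_greedyInvariant hzero hmono hsubmod univ
  have hstab := h.stable hsubmod
  refine ⟨S, p, h.disjoint, h.biUnion_eq, h.nonneg, hstab, h.sum_eq_sum,
    fun S' hdisj' hcover' => ?_⟩
  rw [← h.sum_eq_sum]
  exact sum_le_two_mul_sum_of_stable v hmono h.nonneg hstab h.disjoint h.biUnion_eq hdisj' hcover'

/-- For every instance with monotone submodular project valuations, there exists a
`(1,2)`-core stable solution: an allocation `S` with payments `p` that are nonnegative,
stable, budget-balanced, and such that `SW(S) ≥ OPT / 2`. -/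
theorem stmt1 {𝒩 P : Type*} [Fintype 𝒩] [DecidableEq 𝒩] [Fintype P] [Nonempty P]
    (v : P → Finset 𝒩 → ℝ)
    (hzero : ∀ k, v k ∅ = 0)
    (hnonneg : ∀ k (T : Finset 𝒩), 0 ≤ v k T)
    (hmono : ∀ k (A B : Finset 𝒩), A ⊆ B → v k A ≤ v k B)
    (hsubmod : ∀ k (A B : Finset 𝒩) (i : 𝒩), A ⊆ B →
      v k (insert i B) - v k B ≤ v k (insert i A) - v k A) :
    ∃ (S : P → Finset 𝒩) (p : 𝒩 → ℝ),
      -- S is an allocation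
      (∀ k l, k ≠ l → Disjoint (S k) (S l)) ∧
      Finset.univ.biUnion S = Finset.univ ∧
      -- p is a payment vector
      (∀ i, 0 ≤ p i) ∧
      -- stability
      (∀ k (T : Finset 𝒩), v k (S k ∪ T) ≤ ∑ i ∈ S k ∪ T, p i) ∧
      -- budget balance
      (∑ i, p i = ∑ k, v k (S k)) ∧
      -- SW(S) ≥ OPT / 2
      (∀ S' : P → Finset 𝒩,
        (∀ k l, k ≠ l → Disjoint (S' k) (S' l)) →
        Finset.univ.biUnion S' = Finset.univ →
        ∑ k, v k (S' k) ≤ 2 * ∑ k, v k (S k)) :=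
  stmt1_general v hzero hmono hsubmod
end

section
/- Suppose each project valuation v_k is monotone and submodular with v_k(∅)=0. Let S be an allocation and p a payment vector such that (i) for every project k, Σ_{i∈S_k} p_i = v_k(S_k), and (ii) for every project k and every agent i ∉ S_k, p_i ≥ v_k(S_k ∪ {i}) − v_k(S_k). Then (S, p) is core stable: it is budget-balanced, and for every project k and every set T ⊆ 𝒩, v_k(S_k ∪ T) ≤ Σ_{i ∈ S_k ∪ T} p_i. -/
/-! Adding the agents of `T \ S k` to `S k` one at a time, submodularity bounds each marginal
gain by the marginal gain at `S k` itself, which the agent's payment dominates by (ii).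
Telescoping, `v k (S k ∪ T) ≤ v k (S k) + ∑_{T \ S k} p`, and (i) turns the right-hand side
into `∑_{S k ∪ T} p`. Budget balance is (i) summed over the partition `S`. -/

namespace Finset

variable {α : Type*} [DecidableEq α] {f : Finset α → ℝ} {A : Finset α} {p : α → ℝ}

theorem le_add_sum_of_disjoint_of_marginal_le
    (hmarg : ∀ B i, A ⊆ B → i ∉ A → f (insert i B) - f B ≤ p i)
    {U : Finset α} (hU : Disjoint A U) : f (A ∪ U) ≤ f A + ∑ i ∈ U, p i := by
  induction U using Finset.induction_on with
  | empty => simp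
  | insert i U hiU ih =>
    rw [disjoint_insert_right] at hU
    have hgain := hmarg (A ∪ U) i subset_union_left hU.1
    rw [union_insert, sum_insert hiU]
    linarith [ih hU.2]

theorem le_sum_union_of_marginal_le (hA : f A ≤ ∑ i ∈ A, p i)
    (hmarg : ∀ B i, A ⊆ B → i ∉ A → f (insert i B) - f B ≤ p i) (T : Finset α) :
    f (A ∪ T) ≤ ∑ i ∈ A ∪ T, p i := by
  rw [← union_sdiff_self_eq_union, sum_union disjoint_sdiff]
  linarith [le_add_sum_of_disjoint_of_marginal_le hmarg (disjoint_sdiff (s := A) (t := T))]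

end Finset

theorem stmt2_general {𝒩 P : Type*} [Fintype 𝒩] [DecidableEq 𝒩] [Fintype P]
    (v : P → Finset 𝒩 → ℝ)
    (hsubmod : ∀ k (A B : Finset 𝒩) (i : 𝒩), A ⊆ B →
      v k (insert i B) - v k B ≤ v k (insert i A) - v k A)
    -- S is an allocation
    (S : P → Finset 𝒩)
    (hdisj : ∀ k l, k ≠ l → Disjoint (S k) (S l))
    (hcover : Finset.univ.biUnion S = Finset.univ)
    -- p is a payment vector
    (p : 𝒩 → ℝ)
    -- (i) payments on each project sum to the project's value
    (hsum : ∀ k, ∑ i ∈ S k, p i = v k (S k))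
    -- (ii) outside agents' payments dominate their marginal values
    (hmarg : ∀ k (i : 𝒩), i ∉ S k → v k (insert i (S k)) - v k (S k) ≤ p i) :
    -- budget balance
    (∑ i, p i = ∑ k, v k (S k)) ∧
    -- stability
    (∀ k (T : Finset 𝒩), v k (S k ∪ T) ≤ ∑ i ∈ S k ∪ T, p i) := by
  refine ⟨?_, fun k => Finset.le_sum_union_of_marginal_le (hsum k).ge fun B i hB hi => ?_⟩
  · rw [← hcover, Finset.sum_biUnion fun k _ l _ hkl => hdisj k l hkl]
    exact Finset.sum_congr rfl fun k _ => hsum k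
  · exact (hsubmod k (S k) B i hB).trans (hmarg k i hi)

/-- For monotone submodular valuations: if the payments on each project sum exactly to
the project's value, and each outside agent's payment dominates her marginal value to
the project, then the solution is core stable (budget-balanced and stable). -/
theorem stmt2 {𝒩 P : Type*} [Fintype 𝒩] [DecidableEq 𝒩] [Fintype P]
    (v : P → Finset 𝒩 → ℝ)
    (hzero : ∀ k, v k ∅ = 0)
    (hnonneg : ∀ k (T : Finset 𝒩), 0 ≤ v k T)
    (hmono : ∀ k (A B : Finset 𝒩), A ⊆ B → v k A ≤ v k B)
    (hsubmod : ∀ k (A B : Finset 𝒩) (i : 𝒩), A ⊆ B →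
      v k (insert i B) - v k B ≤ v k (insert i A) - v k A)
    -- S is an allocation
    (S : P → Finset 𝒩)
    (hdisj : ∀ k l, k ≠ l → Disjoint (S k) (S l))
    (hcover : Finset.univ.biUnion S = Finset.univ)
    -- p is a payment vector
    (p : 𝒩 → ℝ) (hp : ∀ i, 0 ≤ p i)
    -- (i) payments on each project sum to the project's value
    (hsum : ∀ k, ∑ i ∈ S k, p i = v k (S k))
    -- (ii) outside agents' payments dominate their marginal values
    (hmarg : ∀ k (i : 𝒩), i ∉ S k → v k (insert i (S k)) - v k (S k) ≤ p i) :
    -- budget balance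
    (∑ i, p i = ∑ k, v k (S k)) ∧
    -- stability
    (∀ k (T : Finset 𝒩), v k (S k ∪ T) ≤ ∑ i ∈ S k ∪ T, p i) :=
  stmt2_general v hsubmod S hdisj hcover p hsum hmarg
end

section
/- For every ε with 0 < ε < 2, there exist a number of agents N and an instance with two projects whose valuations v_1, v_2 are monotone, anonymous, and subadditive (with v_k(∅)=0), such that every stable pair (S, p) satisfies Σ_{i∈𝒩} p_i > (2−ε)·SW(S). Consequently, for this instance no (2−ε)-budget-balanced stable solution exists, i.e., no (2−ε, c)-core stable solution exists for any c. -/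
/-!
Project 0 is worth 1 to every proper nonempty coalition but 2 to the grand coalition, and
project 1 is worth a small constant `δ = ε / 2` to every nonempty coalition. Stability against
the grand coalition joining project 0 forces total payments of at least 2. If project 1 is
staffed, project 0 is not the grand coalition, so the welfare is at most `1 + δ` and
`(2 - ε)(1 + δ) < 2`. If project 1 is empty, every agent alone could found it, so each is paid
at least `δ`; with `N δ ≥ 4` the payments are at least `4 > (2 - ε) · 2`, while the welfare is
at most 2.
-/

open Finset

structure IsAnonymousSubadditiveValuation {ι : Type*} [DecidableEq ι] (w : Finset ι → ℝ) :
    Prop where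
  map_empty : w ∅ = 0
  nonneg : ∀ T, 0 ≤ w T
  mono : ∀ A B, A ⊆ B → w A ≤ w B
  anonymous : ∀ A B, #A = #B → w A = w B
  subadditive : ∀ A B, w (A ∪ B) ≤ w A + w B

theorem isAnonymousSubadditiveValuation_comp_card {ι : Type*} [DecidableEq ι] {f : ℕ → ℝ}
    (h0 : f 0 = 0) (hmono : Monotone f) (hsub : Subadditive f) :
    IsAnonymousSubadditiveValuation fun T : Finset ι => f #T where
  map_empty := by simpa using h0
  nonneg T := h0 ▸ hmono (Nat.zero_le _)
  mono _ _ h := hmono (card_le_card h)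
  anonymous _ _ h := by rw [h]
  subadditive A B := (hmono (card_union_le A B)).trans (hsub _ _)

def twoStep (N n : ℕ) : ℝ := if n = 0 then 0 else if n < N then 1 else 2

def oneStep (δ : ℝ) (n : ℕ) : ℝ := if n = 0 then 0 else δ

section Steps

variable {N n : ℕ} {δ : ℝ}

theorem twoStep_zero : twoStep N 0 = 0 := if_pos rfl

theorem twoStep_le_two : twoStep N n ≤ 2 := by
  unfold twoStep; split_ifs <;> norm_num

theorem twoStep_le_one_of_lt (h : n < N) : twoStep N n ≤ 1 := by
  unfold twoStep; split_ifs <;> norm_num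

theorem twoStep_self (hN : N ≠ 0) : twoStep N N = 2 := by
  simp [twoStep, hN]

theorem one_le_twoStep (h : n ≠ 0) : 1 ≤ twoStep N n := by
  unfold twoStep; split_ifs <;> first | omega | norm_num

theorem monotone_twoStep : Monotone (twoStep N) := by
  intro a b hab
  unfold twoStep
  split_ifs <;> first | omega | norm_num

theorem subadditive_twoStep : Subadditive (twoStep N) := by
  intro a b
  rcases Nat.eq_zero_or_pos a with rfl | ha
  · simp [twoStep_zero]
  rcases Nat.eq_zero_or_pos b with rfl | hb
  · simp [twoStep_zero]
  linarith [one_le_twoStep (N := N) ha.ne', one_le_twoStep (N := N) hb.ne',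
    twoStep_le_two (N := N) (n := a + b)]

theorem oneStep_zero : oneStep δ 0 = 0 := if_pos rfl

theorem oneStep_of_ne_zero (h : n ≠ 0) : oneStep δ n = δ := if_neg h

theorem oneStep_nonneg (hδ : 0 ≤ δ) : 0 ≤ oneStep δ n := by
  unfold oneStep; split_ifs <;> linarith

theorem oneStep_le (hδ : 0 ≤ δ) : oneStep δ n ≤ δ := by
  unfold oneStep; split_ifs <;> linarith

theorem monotone_oneStep (hδ : 0 ≤ δ) : Monotone (oneStep δ) := by
  intro a b hab
  unfold oneStep
  split_ifs <;> first | linarith | omega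

theorem subadditive_oneStep (hδ : 0 ≤ δ) : Subadditive (oneStep δ) := by
  intro a b
  rcases Nat.eq_zero_or_pos a with rfl | ha
  · simp [oneStep_zero]
  rw [oneStep_of_ne_zero (by omega), oneStep_of_ne_zero ha.ne']
  linarith [oneStep_nonneg (n := b) hδ]

end Steps

def IsCoreStable {κ ι : Type*} [DecidableEq ι] (v : κ → Finset ι → ℝ) (S : κ → Finset ι)
    (p : ι → ℝ) : Prop :=
  ∀ k T, v k (S k ∪ T) ≤ ∑ i ∈ S k ∪ T, p i

namespace IsCoreStable

variable {κ ι : Type*} [DecidableEq ι] {v : κ → Finset ι → ℝ} {S : κ → Finset ι} {p : ι → ℝ}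

theorem le_sum_univ [Fintype ι] (h : IsCoreStable v S p) (k : κ) : v k univ ≤ ∑ i, p i := by
  simpa [union_eq_right.2 (subset_univ (S k))] using h k univ

theorem le_of_eq_empty (h : IsCoreStable v S p) {k : κ} (hk : S k = ∅) (i : ι) :
    v k {i} ≤ p i := by
  simpa [hk] using h k {i}

end IsCoreStable

section LowerBoundInstance

variable (ι : Type*) [Fintype ι] [DecidableEq ι]

noncomputable def lowerBoundValuation (ε : ℝ) : Fin 2 → Finset ι → ℝ :=
  ![fun T => twoStep (Fintype.card ι) #T, fun T => oneStep (ε / 2) #T]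

variable {ι}

theorem isAnonymousSubadditiveValuation_lowerBoundValuation {ε : ℝ} (hε : 0 ≤ ε) (k : Fin 2) :
    IsAnonymousSubadditiveValuation (lowerBoundValuation ι ε k) := by
  fin_cases k
  · exact isAnonymousSubadditiveValuation_comp_card twoStep_zero monotone_twoStep
      subadditive_twoStep
  · exact isAnonymousSubadditiveValuation_comp_card oneStep_zero (monotone_oneStep (by linarith))
      (subadditive_oneStep (by linarith))

theorem lowerBoundValuation_payments_gt {ε : ℝ} (hε0 : 0 < ε) (hε2 : ε ≤ 2)
    (hN : 8 ≤ Fintype.card ι * ε) {S : Fin 2 → Finset ι} {p : ι → ℝ}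
    (hdisj : Disjoint (S 0) (S 1)) (hstab : IsCoreStable (lowerBoundValuation ι ε) S p) :
    (2 - ε) * ∑ k, lowerBoundValuation ι ε k (S k) < ∑ i, p i := by
  set N := Fintype.card ι
  have hN0 : N ≠ 0 := by rintro h; simp [h] at hN; linarith
  have hgrand : 2 ≤ ∑ i, p i := by
    have h := hstab.le_sum_univ 0
    rwa [lowerBoundValuation, Matrix.cons_val_zero, card_univ, twoStep_self hN0] at h
  simp only [Fin.sum_univ_two, lowerBoundValuation, Matrix.cons_val_zero, Matrix.cons_val_one]
  by_cases h1 : S 1 = ∅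
  · have hsingle : ∀ i, ε / 2 ≤ p i := fun i => by
      simpa [lowerBoundValuation, oneStep_of_ne_zero] using hstab.le_of_eq_empty h1 i
    have hsum : N • (ε / 2) ≤ ∑ i, p i := card_nsmul_le_sum univ p _ fun i _ => hsingle i
    rw [nsmul_eq_mul] at hsum
    rw [h1, card_empty, oneStep_zero]
    nlinarith [twoStep_le_two (N := N) (n := #(S 0))]
  · obtain ⟨i, hi⟩ := nonempty_iff_ne_empty.2 h1
    have h0 : #(S 0) < N := card_lt_univ_of_notMem (disjoint_right.1 hdisj hi)
    calc (2 - ε) * (twoStep N #(S 0) + oneStep (ε / 2) #(S 1)) ≤ (2 - ε) * (1 + ε / 2) :=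
          mul_le_mul_of_nonneg_left
            (add_le_add (twoStep_le_one_of_lt h0) (oneStep_le (by linarith))) (by linarith)
      _ < 2 := by nlinarith
      _ ≤ ∑ i, p i := hgrand

end LowerBoundInstance

/-- Lower bound: for every `0 < ε < 2` there is an instance with two projects whose
valuations are monotone, anonymous, and subadditive, such that every stable solution
has total payments strictly larger than `(2 - ε)` times its social welfare; hence no
`(2-ε, c)`-core stable solution exists for any `c`. -/
theorem stmt4 (ε : ℝ) (hε0 : 0 < ε) (hε2 : ε < 2) :
    ∃ (N : ℕ) (v : Fin 2 → Finset (Fin N) → ℝ),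
      (∀ k, v k ∅ = 0) ∧
      (∀ k (T : Finset (Fin N)), 0 ≤ v k T) ∧
      -- monotone
      (∀ k (A B : Finset (Fin N)), A ⊆ B → v k A ≤ v k B) ∧
      -- anonymous
      (∀ k (A B : Finset (Fin N)), A.card = B.card → v k A = v k B) ∧
      -- subadditive
      (∀ k (A B : Finset (Fin N)), v k (A ∪ B) ≤ v k A + v k B) ∧
      -- every stable pair has payments exceeding (2-ε) times its welfare
      (∀ (S : Fin 2 → Finset (Fin N)) (p : Fin N → ℝ),
        (∀ k l, k ≠ l → Disjoint (S k) (S l)) →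
        Finset.univ.biUnion S = Finset.univ →
        (∀ i, 0 ≤ p i) →
        (∀ k (T : Finset (Fin N)), v k (S k ∪ T) ≤ ∑ i ∈ S k ∪ T, p i) →
        (2 - ε) * ∑ k, v k (S k) < ∑ i, p i) := by
  set N := ⌈8 / ε⌉₊
  have hN : 8 ≤ Fintype.card (Fin N) * ε := by
    rw [Fintype.card_fin, ← div_le_iff₀ hε0]
    exact Nat.le_ceil _
  have hv := isAnonymousSubadditiveValuation_lowerBoundValuation (ι := Fin N) hε0.le
  refine ⟨N, lowerBoundValuation (Fin N) ε, fun k => (hv k).map_empty, fun k => (hv k).nonneg,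
    fun k => (hv k).mono, fun k => (hv k).anonymous, fun k => (hv k).subadditive, ?_⟩
  intro S p hdisj _ _ hstab
  exact lowerBoundValuation_payments_gt hε0 hε2.le hN (hdisj 0 1 (by decide)) hstab
end

section
/- For every ε with 0 < ε < 1 and every α ≥ 1, there exist a number of agents N and an instance with two projects whose valuations v_1, v_2 are monotone, anonymous, and subadditive (with v_k(∅)=0), such that no allocation S with payment vector p satisfies simultaneously: (S, p) is stable, Σ_{i∈𝒩} p_i ≤ α·SW(S), and (2−ε)·SW(S) ≥ OPT. That is, no (α, 2−ε)-core stable solution exists. -/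
/-! Take `n` agents and two projects, both valued only through coalition size: project `0` is
worth `1` to every proper nonempty coalition and `2` to the grand coalition, project `1` is
worth `ε / 2` to every nonempty coalition. Giving everything to project `0` has welfare `2`,
while any other allocation has welfare at most `1 + ε / 2`, and `(2 - ε) (1 + ε / 2) < 2`;
so a `(2 - ε)`-approximate allocation leaves project `1` empty. Stability against project `1`
recruiting a single agent then forces every payment to be at least `ε / 2`, for a total of
`n ε / 2`, which exceeds the budget `2 α` once `n > 4 α / ε`. -/

open Finset

section CardValuation

variable {ι : Type*} [DecidableEq ι] {f : ℕ → ℝ}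

theorem map_add_le_of_le_two_mul_map_one (hmono : Monotone f) (h0 : f 0 = 0)
    (hle : ∀ n, f n ≤ 2 * f 1) (m n : ℕ) : f (m + n) ≤ f m + f n := by
  rcases Nat.eq_zero_or_pos m with rfl | hm
  · simp [h0]
  rcases Nat.eq_zero_or_pos n with rfl | hn
  · simp [h0]
  linarith [hle (m + n), hmono hm, hmono hn]

theorem card_union_valuation_le (hmono : Monotone f)
    (hadd : ∀ m n, f (m + n) ≤ f m + f n) (A B : Finset ι) :
    f #(A ∪ B) ≤ f #A + f #B :=
  (hmono (card_union_le A B)).trans (hadd _ _)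

end CardValuation

section Allocation

variable {ι κ : Type*}

def IsAllocation [Fintype ι] [DecidableEq ι] [Fintype κ] (S : κ → Finset ι) : Prop :=
  (∀ k l, k ≠ l → Disjoint (S k) (S l)) ∧ univ.biUnion S = univ

def IsStable [DecidableEq ι] (v : κ → Finset ι → ℝ) (S : κ → Finset ι) (p : ι → ℝ) : Prop :=
  ∀ k T, v k (S k ∪ T) ≤ ∑ i ∈ S k ∪ T, p i

def welfare [Fintype κ] (v : κ → Finset ι → ℝ) (S : κ → Finset ι) : ℝ :=
  ∑ k, v k (S k)

theorem IsAllocation.eq_empty_of_eq_univ [Fintype ι] [DecidableEq ι] [Fintype κ]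
    {S : κ → Finset ι} (hS : IsAllocation S) {k l : κ} (hk : S k = univ) (hlk : l ≠ k) :
    S l = ∅ :=
  eq_empty_of_forall_notMem fun i hi => disjoint_left.1 (hS.1 l k hlk) hi (hk ▸ mem_univ i)

theorem isAllocation_ite_univ [Fintype ι] [DecidableEq ι] [Fintype κ] [DecidableEq κ] (k : κ) :
    IsAllocation (fun l => if l = k then (univ : Finset ι) else ∅) := by
  refine ⟨fun l l' hll' => ?_, eq_univ_of_forall fun i => mem_biUnion.2 ⟨k, by simp⟩⟩
  by_cases hl : l = k
  · simp [hl, Ne.symm (hl ▸ hll')]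
  · simp [hl]

theorem welfare_ite_univ [Fintype ι] [Fintype κ] [DecidableEq κ] {v : κ → Finset ι → ℝ}
    (hv : ∀ l, v l ∅ = 0) (k : κ) :
    welfare v (fun l => if l = k then univ else ∅) = v k univ := by
  rw [welfare, Fintype.sum_eq_single k fun l hl => by simp [hl, hv]]
  simp

theorem IsStable.sum_singleton_le [Fintype ι] [DecidableEq ι] {v : κ → Finset ι → ℝ}
    {S : κ → Finset ι} {p : ι → ℝ} (hstab : IsStable v S p) {k : κ} (hk : S k = ∅) :
    ∑ i, v k {i} ≤ ∑ i, p i :=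
  sum_le_sum fun i _ => by simpa [hk] using hstab k {i}

end Allocation

section TwoProjects

variable {ι : Type*} [Fintype ι] {n : ℕ} {c : ℝ}

def twoProjectValue (n : ℕ) (c : ℝ) : Fin 2 → ℕ → ℝ :=
  ![fun m => if m = 0 then 0 else if m < n then 1 else 2,
    fun m => if m = 0 then 0 else c]

theorem twoProjectValue_zero (k : Fin 2) : twoProjectValue n c k 0 = 0 := by
  fin_cases k <;> rfl

theorem twoProjectValue_monotone (hc : 0 ≤ c) (k : Fin 2) : Monotone (twoProjectValue n c k) := by
  intro a b hab
  fin_cases k <;> dsimp [twoProjectValue] <;> split_ifs <;> first | linarith | omega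

theorem twoProjectValue_le_two_mul_one (hc : 0 ≤ c) (k : Fin 2) (m : ℕ) :
    twoProjectValue n c k m ≤ 2 * twoProjectValue n c k 1 := by
  fin_cases k <;> dsimp [twoProjectValue] <;> split_ifs <;> linarith

theorem welfare_twoProjectValue_le_of_ne_univ (hn : Fintype.card ι ≤ n) (hc : 0 ≤ c)
    {S : Fin 2 → Finset ι} (hS : S 0 ≠ univ) :
    welfare (fun k A => twoProjectValue n c k #A) S ≤ 1 + c := by
  have hlt : #(S 0) < n := ((card_lt_iff_ne_univ _).2 hS).trans_le hn
  simp only [welfare, Fin.sum_univ_two, twoProjectValue, Matrix.cons_val_zero,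
    Matrix.cons_val_one, hlt, if_true]
  split_ifs <;> linarith

theorem eq_univ_of_two_le_mul_welfare (hn : Fintype.card ι ≤ n) {ε : ℝ} (hε : 0 < ε)
    {S : Fin 2 → Finset ι}
    (happrox : 2 ≤ (2 - ε) * welfare (fun k A => twoProjectValue n (ε / 2) k #A) S) :
    S 0 = univ := by
  by_contra hS
  set w := welfare (fun k A => twoProjectValue n (ε / 2) k #A) S
  have hw : w ≤ 1 + ε / 2 := welfare_twoProjectValue_le_of_ne_univ hn (by positivity) hS
  have hw0 : 0 ≤ w := sum_nonneg fun k _ =>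
    twoProjectValue_zero (n := n) k ▸ twoProjectValue_monotone (by positivity) k
      (Nat.zero_le _)
  rcases le_or_gt ε 2 with hε2 | hε2
  · nlinarith [mul_le_mul_of_nonneg_left hw (sub_nonneg.2 hε2)]
  · nlinarith

end TwoProjects

theorem stmt5_general (ε α : ℝ) (hε0 : 0 < ε) :
    ∃ (N : ℕ) (v : Fin 2 → Finset (Fin N) → ℝ),
      (∀ k, v k ∅ = 0) ∧
      (∀ k (T : Finset (Fin N)), 0 ≤ v k T) ∧
      -- monotone
      (∀ k (A B : Finset (Fin N)), A ⊆ B → v k A ≤ v k B) ∧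
      -- anonymous
      (∀ k (A B : Finset (Fin N)), A.card = B.card → v k A = v k B) ∧
      -- subadditive
      (∀ k (A B : Finset (Fin N)), v k (A ∪ B) ≤ v k A + v k B) ∧
      ¬ ∃ (S : Fin 2 → Finset (Fin N)) (p : Fin N → ℝ),
          -- S is an allocation
          (∀ k l, k ≠ l → Disjoint (S k) (S l)) ∧
          Finset.univ.biUnion S = Finset.univ ∧
          -- p is a payment vector
          (∀ i, 0 ≤ p i) ∧
          -- stability
          (∀ k (T : Finset (Fin N)), v k (S k ∪ T) ≤ ∑ i ∈ S k ∪ T, p i) ∧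
          -- α-budget balance
          (∑ i, p i ≤ α * ∑ k, v k (S k)) ∧
          -- (2-ε)·SW(S) ≥ OPT
          (∀ S' : Fin 2 → Finset (Fin N),
            (∀ k l, k ≠ l → Disjoint (S' k) (S' l)) →
            Finset.univ.biUnion S' = Finset.univ →
            ∑ k, v k (S' k) ≤ (2 - ε) * ∑ k, v k (S k)) := by
  obtain ⟨n, hn⟩ := exists_nat_gt (4 * α / ε)
  set v : Fin 2 → Finset (Fin (n + 1)) → ℝ := fun k A => twoProjectValue (n + 1) (ε / 2) k #A
  have hv0 : ∀ k, v k ∅ = 0 := twoProjectValue_zero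
  have hmono : ∀ k, Monotone (twoProjectValue (n + 1) (ε / 2) k) :=
    twoProjectValue_monotone (by positivity)
  refine ⟨n + 1, v, hv0, fun k T => hv0 k ▸ hmono k (Nat.zero_le _),
    fun k A B hAB => hmono k (card_le_card hAB), fun k A B h => by simp only [v, h],
    fun k => card_union_valuation_le (hmono k) (map_add_le_of_le_two_mul_map_one (hmono k)
      (twoProjectValue_zero k) (twoProjectValue_le_two_mul_one (by positivity) k)), ?_⟩
  rintro ⟨S, p, hdisj, hcover, -, hstab, hbudget, happrox⟩
  have hgrand : welfare v (fun l => if l = 0 then univ else ∅) = 2 := by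
    rw [welfare_ite_univ hv0]
    simp only [v, twoProjectValue, card_univ, Fintype.card_fin]
    simp
  have hOPT : 2 ≤ (2 - ε) * welfare v S :=
    calc (2 : ℝ) = welfare v (fun l => if l = 0 then univ else ∅) := hgrand.symm
      _ ≤ _ := happrox _ (isAllocation_ite_univ 0).1 (isAllocation_ite_univ 0).2
  have hS0 : S 0 = univ := eq_univ_of_two_le_mul_welfare (Fintype.card_fin _).le hε0 hOPT
  have hS1 : S 1 = ∅ := IsAllocation.eq_empty_of_eq_univ ⟨hdisj, hcover⟩ hS0 (by decide)
  have hpay : ((n : ℝ) + 1) * (ε / 2) ≤ ∑ i, p i := by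
    simpa [v, twoProjectValue] using IsStable.sum_singleton_le hstab hS1
  have hgrandS : S = fun l => if l = 0 then univ else ∅ :=
    funext <| Fin.forall_fin_two.2 ⟨by simp [hS0], by simp [hS1]⟩
  have hwelfare : welfare v S = 2 := hgrandS ▸ hgrand
  have hbudget2 : ∑ i, p i ≤ α * 2 := by rw [← hwelfare]; exact hbudget
  rw [div_lt_iff₀ hε0] at hn
  linarith

/-- Lower bound: for every `0 < ε < 1` and every `α ≥ 1` there is an instance with two
projects whose valuations are monotone, anonymous, and subadditive, admitting no
`(α, 2-ε)`-core stable solution: no stable pair with `α`-budget-balanced payments whose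
allocation is a `(2-ε)`-approximation to the optimal welfare. -/
theorem stmt5 (ε α : ℝ) (hε0 : 0 < ε) (hε1 : ε < 1) (hα : 1 ≤ α) :
    ∃ (N : ℕ) (v : Fin 2 → Finset (Fin N) → ℝ),
      (∀ k, v k ∅ = 0) ∧
      (∀ k (T : Finset (Fin N)), 0 ≤ v k T) ∧
      -- monotone
      (∀ k (A B : Finset (Fin N)), A ⊆ B → v k A ≤ v k B) ∧
      -- anonymous
      (∀ k (A B : Finset (Fin N)), A.card = B.card → v k A = v k B) ∧
      -- subadditive
      (∀ k (A B : Finset (Fin N)), v k (A ∪ B) ≤ v k A + v k B) ∧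
      ¬ ∃ (S : Fin 2 → Finset (Fin N)) (p : Fin N → ℝ),
          -- S is an allocation
          (∀ k l, k ≠ l → Disjoint (S k) (S l)) ∧
          Finset.univ.biUnion S = Finset.univ ∧
          -- p is a payment vector
          (∀ i, 0 ≤ p i) ∧
          -- stability
          (∀ k (T : Finset (Fin N)), v k (S k ∪ T) ≤ ∑ i ∈ S k ∪ T, p i) ∧
          -- α-budget balance
          (∑ i, p i ≤ α * ∑ k, v k (S k)) ∧
          -- (2-ε)·SW(S) ≥ OPT
          (∀ S' : Fin 2 → Finset (Fin N),
            (∀ k l, k ≠ l → Disjoint (S' k) (S' l)) →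
            Finset.univ.biUnion S' = Finset.univ →
            ∑ k, v k (S' k) ≤ (2 - ε) * ∑ k, v k (S k)) :=
  stmt5_general ε α hε0
end

section
/- For every instance in which each project valuation v_k is monotone, anonymous, and subadditive (with v_k(∅)=0), there exist an allocation S and a payment vector p̄ such that (S, p̄) is stable, Σ_{i∈𝒩} p̄_i = 2·SW(S), and 2·SW(S) ≥ OPT. That is, a (2,2)-core stable solution exists: the payments are 2-budget-balanced and stable, and the allocation is a 2-approximation to the optimum welfare. -/
set_option maxHeartbeats 1000000

open Finset

/-- Key dual/selection lemma: for "anonymous" valuation profiles `f k n` (value of giving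
`n` agents to project `k`) that are monotone, nonneg, zero at zero and satisfy the halving
property, there is a dual price `z`, dual values `y`, and sizes `s` summing to `N` with the
required feasibility, support, and budget properties. -/
lemma dual_exists {P : Type*} [Fintype P] [Nonempty P] (N : ℕ) (hN : 1 ≤ N)
    (f : P → ℕ → ℝ)
    (hf0 : ∀ k, f k 0 = 0)
    (hfnn : ∀ k n, 0 ≤ f k n)
    (hfmono : ∀ k a b, a ≤ b → f k a ≤ f k b)
    (hfhalf : ∀ k t n, n ≤ 2 * t → n ≤ N → f k n ≤ 2 * f k t) :
    ∃ (z : ℝ) (y : P → ℝ) (s : P → ℕ),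
      0 ≤ z ∧ (∀ k, 0 ≤ y k) ∧
      (∀ k n, n ≤ N → f k n ≤ y k + n * z) ∧
      (∑ k, s k = N) ∧
      (∀ k, s k = 0 → y k = 0) ∧
      ((∑ k, y k) + N * z ≤ 2 * ∑ k, f k (s k)) := by
  classical
  have hrne : (range (N+1)).Nonempty := ⟨0, by simp⟩
  set Y : ℝ → P → ℝ := fun z k => (range (N+1)).sup' hrne (fun n => f k n - n * z) with hYdef
  have hYge : ∀ z k n, n ≤ N → f k n - n * z ≤ Y z k := by
    intro z k n hn
    exact Finset.le_sup' (fun n => f k n - n * z) (Finset.mem_range.mpr (by omega))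
  have hYnn : ∀ z k, 0 ≤ Y z k := by
    intro z k
    simpa [hf0] using hYge z k 0 (Nat.zero_le N)
  set D : ℝ → ℝ := fun z => (∑ k, Y z k) + N * z with hDdef
  have hDcont : Continuous D := by
    apply Continuous.add
    · apply continuous_finset_sum
      intro k _
      exact Continuous.finset_sup'_apply hrne (fun n _ => by continuity)
    · continuity
  set c : ℝ := ∑ k : P, f k N with hcdef
  have hcnn : 0 ≤ c := Finset.sum_nonneg fun k _ => hfnn k N
  have hfc : ∀ k, f k N ≤ c := fun k =>
    Finset.single_le_sum (fun k _ => hfnn k N) (mem_univ k)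
  have hYzero : ∀ z, c ≤ z → ∀ k, Y z k = 0 := by
    intro z hz k
    refine le_antisymm ?_ (hYnn z k)
    apply Finset.sup'_le
    intro n hn
    rcases Nat.eq_zero_or_pos n with h0 | h1
    · simp [h0, hf0 k]
    · have hnN : n ≤ N := by simpa [Nat.lt_succ_iff] using hn
      have h2 : f k n ≤ c := le_trans (hfmono k n N hnN) (hfc k)
      have h3 : (1:ℝ) ≤ (n:ℝ) := by exact_mod_cast h1
      nlinarith [hcnn]
  obtain ⟨zs, hzsmem, hzsmin⟩ :=
    isCompact_Icc.exists_isMinOn (Set.nonempty_Icc.mpr hcnn) hDcont.continuousOn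
  have hzs0 : 0 ≤ zs := hzsmem.1
  have hglob : ∀ z, 0 ≤ z → D zs ≤ D z := by
    intro z hz
    by_cases hzc : z ≤ c
    · exact isMinOn_iff.mp hzsmin z ⟨hz, hzc⟩
    · push_neg at hzc
      have h1 : D zs ≤ D c := isMinOn_iff.mp hzsmin c ⟨hcnn, le_refl c⟩
      have hDc : D c = N * c := by simp [hDdef, hYzero c le_rfl]
      have hDz : D z = N * z := by simp [hDdef, hYzero z hzc.le]
      have h2 : (N:ℝ) * c ≤ N * z :=
        mul_le_mul_of_nonneg_left hzc.le (by positivity)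
      linarith
  -- argmax sets
  set M : P → Finset ℕ := fun k =>
    (range (N+1)).filter (fun n => f k n - n * zs = Y zs k) with hMdef
  have hMne : ∀ k, (M k).Nonempty := by
    intro k
    obtain ⟨n, hn, hvn⟩ := Finset.exists_mem_eq_sup' hrne (fun n => f k n - n * zs)
    exact ⟨n, mem_filter.mpr ⟨hn, hvn.symm⟩⟩
  set nlo : P → ℕ := fun k => (M k).min' (hMne k) with hnlodef
  set nhi : P → ℕ := fun k => (M k).max' (hMne k) with hnhidef
  have hloM : ∀ k, nlo k ∈ M k := fun k => min'_mem _ _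
  have hhiM : ∀ k, nhi k ∈ M k := fun k => max'_mem _ _
  have hloN : ∀ k, nlo k ≤ N := fun k => by
    have := (mem_filter.mp (hloM k)).1; simpa [Nat.lt_succ_iff] using this
  have hhiN : ∀ k, nhi k ≤ N := fun k => by
    have := (mem_filter.mp (hhiM k)).1; simpa [Nat.lt_succ_iff] using this
  have hloeq : ∀ k, f k (nlo k) - nlo k * zs = Y zs k := fun k => (mem_filter.mp (hloM k)).2
  have hhieq : ∀ k, f k (nhi k) - nhi k * zs = Y zs k := fun k => (mem_filter.mp (hhiM k)).2
  have hlohi : ∀ k, nlo k ≤ nhi k := fun k => min'_le _ _ (max'_mem _ _)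
  have hy0 : ∀ k, nlo k = 0 → Y zs k = 0 := by
    intro k h
    have := hloeq k
    rw [h] at this
    simpa [hf0 k] using this.symm
  -- bad pairs and δ₀
  set Bd : Finset (P × ℕ) :=
    (univ ×ˢ range (N+1)).filter (fun p => f p.1 p.2 - p.2 * zs < Y zs p.1) with hBddef
  set δ0 : ℝ := if hB : Bd.Nonempty then
      (Bd.inf' hB (fun p => Y zs p.1 - (f p.1 p.2 - p.2 * zs))) / (N+1) else 1 with hδ0def
  have hδ0pos : 0 < δ0 := by
    rw [hδ0def]
    split_ifs with hB
    · apply div_pos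
      · obtain ⟨p, hp, hpe⟩ := Finset.exists_mem_eq_inf' hB
          (fun p => Y zs p.1 - (f p.1 p.2 - p.2 * zs))
        rw [hpe]
        have := (mem_filter.mp hp).2
        linarith
      · positivity
    · norm_num
  have hδ0key : ∀ k n, n ≤ N → f k n - n * zs < Y zs k →
      f k n - n * zs ≤ Y zs k - (N+1) * δ0 := by
    intro k n hn hlt
    have hmem : (k, n) ∈ Bd := by
      rw [hBddef]
      exact mem_filter.mpr ⟨mem_product.mpr ⟨mem_univ k, by simp [Nat.lt_succ_iff, hn]⟩, hlt⟩
    have hB : Bd.Nonempty := ⟨_, hmem⟩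
    have h1 := Finset.inf'_le (fun p : P × ℕ => Y zs p.1 - (f p.1 p.2 - p.2 * zs)) hmem
    rw [hδ0def, dif_pos hB]
    have hNpos : (0:ℝ) < (N:ℝ) + 1 := by positivity
    have h2 : ((N:ℝ)+1) * ((Bd.inf' hB (fun p => Y zs p.1 - (f p.1 p.2 - p.2 * zs))) / ((N:ℝ)+1))
        = Bd.inf' hB (fun p => Y zs p.1 - (f p.1 p.2 - p.2 * zs)) := by
      rw [mul_div_assoc']; exact mul_div_cancel_left₀ _ hNpos.ne'
    push_cast
    push_cast at h2
    rw [h2]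
    simp only [] at h1
    linarith
  -- the "right derivative" bound
  have hRsum : ∑ k, nlo k ≤ N := by
    have hub : ∀ k, Y (zs + δ0) k ≤ Y zs k - nlo k * δ0 := by
      intro k
      apply Finset.sup'_le
      intro n hn
      have hnN : n ≤ N := by simpa [Nat.lt_succ_iff] using hn
      by_cases hcase : nlo k ≤ n
      · have h1 := hYge zs k n hnN
        have hcast : (nlo k : ℝ) ≤ (n : ℝ) := by exact_mod_cast hcase
        nlinarith [hδ0pos]
      · push_neg at hcase
        have hne : f k n - n * zs ≠ Y zs k := by
          intro h
          have hmem : n ∈ M k := mem_filter.mpr ⟨by simp [Nat.lt_succ_iff, hnN], h⟩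
          have h9 : nlo k ≤ n := Finset.min'_le _ _ hmem
          omega
        have hlt := lt_of_le_of_ne (hYge zs k n hnN) hne
        have h2 := hδ0key k n hnN hlt
        have hc1 : (nlo k : ℝ) ≤ (N : ℝ) := by exact_mod_cast hloN k
        have hc2 : (0:ℝ) ≤ (n:ℝ) := by positivity
        nlinarith [hδ0pos]
    have h1 : D zs ≤ D (zs + δ0) := hglob _ (by linarith)
    have h2 : D (zs + δ0) ≤ (∑ k, (Y zs k - nlo k * δ0)) + N * (zs + δ0) := by
      refine add_le_add ?_ le_rfl
      exact Finset.sum_le_sum (fun k _ => hub k)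
    have h3 : (∑ k, (Y zs k - (nlo k : ℝ) * δ0)) = (∑ k, Y zs k) - (∑ k, (nlo k:ℝ)) * δ0 := by
      rw [Finset.sum_sub_distrib, Finset.sum_mul]
    have h4 : ((∑ k, nlo k : ℕ) : ℝ) = ∑ k, ((nlo k : ℕ) : ℝ) := by push_cast; ring
    have h5 : ((∑ k, nlo k : ℕ) : ℝ) * δ0 ≤ (N:ℝ) * δ0 := by
      rw [h4]
      rw [h3] at h2
      simp only [hDdef] at h1 h2
      linarith
    have := le_of_mul_le_mul_right (by linarith : ((∑ k, nlo k : ℕ) : ℝ) * δ0 ≤ (N:ℝ) * δ0) hδ0pos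
    exact_mod_cast this
  -- feasibility, shared by all cases
  have hfeas : ∀ k n, n ≤ N → f k n ≤ Y zs k + n * zs := by
    intro k n hn
    have := hYge zs k n hn
    linarith
  rcases eq_or_lt_of_le hzs0 with hz0 | hzpos
  · -- z* = 0 case
    subst hz0
    obtain ⟨khat⟩ := (inferInstance : Nonempty P)
    refine ⟨0, Y 0, fun k => nlo k + (if k = khat then N - ∑ j, nlo j else 0),
      le_refl 0, fun k => hYnn 0 k, ?_, ?_, ?_, ?_⟩
    · intro k n hn
      have := hYge 0 k n hn
      linarith
    · rw [Finset.sum_add_distrib, Finset.sum_ite_eq' univ khat (fun _ => N - ∑ j, nlo j)]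
      simp only [mem_univ, if_pos]
      omega
    · intro k hk
      simp only [] at hk
      exact hy0 k (by omega)
    · have h1 : ∀ k, Y 0 k ≤ f k (nlo k + (if k = khat then N - ∑ j, nlo j else 0)) := by
        intro k
        have h2 := hloeq k
        rw [mul_zero, sub_zero] at h2
        have h3 : f k (nlo k) ≤ f k (nlo k + (if k = khat then N - ∑ j, nlo j else 0)) :=
          hfmono k _ _ (Nat.le_add_right _ _)
        linarith
      have h2 := Finset.sum_le_sum (fun k (_ : k ∈ univ) => h1 k)
      have h3 : (0:ℝ) ≤ ∑ k, f k (nlo k + (if k = khat then N - ∑ j, nlo j else 0)) :=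
        Finset.sum_nonneg fun k _ => hfnn k _
      rw [mul_zero, add_zero]
      linarith
  · -- z* > 0 case : left-derivative bound
    have hLsum : N ≤ ∑ k, nhi k := by
      set δ : ℝ := min δ0 zs with hδdef
      have hδpos : 0 < δ := lt_min hδ0pos hzpos
      have hδle : δ ≤ δ0 := min_le_left _ _
      have hδzs : δ ≤ zs := min_le_right _ _
      have hub : ∀ k, Y (zs - δ) k ≤ Y zs k + nhi k * δ := by
        intro k
        apply Finset.sup'_le
        intro n hn
        have hnN : n ≤ N := by simpa [Nat.lt_succ_iff] using hn
        by_cases hcase : n ≤ nhi k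
        · have h1 := hYge zs k n hnN
          have hcast : (n : ℝ) ≤ (nhi k : ℝ) := by exact_mod_cast hcase
          have hc2 : (0:ℝ) ≤ (n:ℝ) := by positivity
          nlinarith
        · push_neg at hcase
          have hne : f k n - n * zs ≠ Y zs k := by
            intro h
            have hmem : n ∈ M k := mem_filter.mpr ⟨by simp [Nat.lt_succ_iff, hnN], h⟩
            have h9 : n ≤ nhi k := Finset.le_max' _ _ hmem
            omega
          have hlt := lt_of_le_of_ne (hYge zs k n hnN) hne
          have h2 := hδ0key k n hnN hlt
          have hc1 : (n : ℝ) ≤ (N : ℝ) := by exact_mod_cast hnN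
          have hc3 : (0:ℝ) ≤ (nhi k : ℝ) := by positivity
          nlinarith
      have h1 : D zs ≤ D (zs - δ) := hglob _ (by linarith)
      have h2 : D (zs - δ) ≤ (∑ k, (Y zs k + nhi k * δ)) + N * (zs - δ) := by
        refine add_le_add ?_ le_rfl
        exact Finset.sum_le_sum (fun k _ => hub k)
      have h3 : (∑ k, (Y zs k + (nhi k : ℝ) * δ)) = (∑ k, Y zs k) + (∑ k, (nhi k:ℝ)) * δ := by
        rw [Finset.sum_add_distrib, Finset.sum_mul]
      have h4 : ((∑ k, nhi k : ℕ) : ℝ) = ∑ k, ((nhi k : ℕ) : ℝ) := by push_cast; ring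
      have h5 : (N:ℝ) * δ ≤ ((∑ k, nhi k : ℕ) : ℝ) * δ := by
        rw [h4]
        rw [h3] at h2
        simp only [hDdef] at h1 h2
        linarith
      have := le_of_mul_le_mul_right (by linarith : (N:ℝ) * δ ≤ ((∑ k, nhi k : ℕ) : ℝ) * δ) hδpos
      exact_mod_cast this
    clear_value D c M nlo nhi Bd δ0
    -- selection of sizes via a maximal upgrade set
    set hfun : Finset P → ℕ := fun A => ∑ k, (if k ∈ A then nhi k else nlo k) with hfundef
    have hfe : hfun ∅ ≤ N := by
      rw [hfundef]
      simpa using hRsum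
    set Fam := ((univ : Finset P).powerset).filter (fun A => hfun A ≤ N) with hFamdef
    have hFamne : Fam.Nonempty :=
      ⟨∅, mem_filter.mpr ⟨Finset.mem_powerset.mpr (empty_subset _), hfe⟩⟩
    obtain ⟨A, hAmem, hAmax⟩ := Finset.exists_max_image Fam Finset.card hFamne
    have hAle : hfun A ≤ N := (mem_filter.mp hAmem).2
    by_cases hAuniv : A = univ
    · -- all upgraded
      have h1 : hfun univ = ∑ k, nhi k := by
        rw [hfundef]; simp
      have h2 : ∑ k, nhi k = N := by
        rw [hAuniv] at hAle
        omega
      refine ⟨zs, Y zs, nhi, hzs0, fun k => hYnn zs k, hfeas, h2, ?_, ?_⟩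
      · intro k hk
        exact hy0 k (by have := hlohi k; omega)
      · have h3 : ∀ k, Y zs k + (nhi k : ℝ) * zs = f k (nhi k) := by
          intro k; have := hhieq k; linarith
        have h4 : (∑ k, Y zs k) + (N:ℝ) * zs = ∑ k, f k (nhi k) := by
          have h6 : ((N:ℕ):ℝ) = ∑ k, ((nhi k : ℕ):ℝ) := by
            rw [← h2]; push_cast; ring
          rw [h6, Finset.sum_mul, ← Finset.sum_add_distrib]
          exact Finset.sum_congr rfl fun k _ => h3 k
        rw [h4]
        have h5 : (0:ℝ) ≤ ∑ k, f k (nhi k) := Finset.sum_nonneg fun k _ => hfnn k _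
        linarith
    · -- there is a blocking project k₀
      obtain ⟨k0, hk0⟩ : ∃ k0, k0 ∉ A := by
        by_contra h
        push_neg at h
        exact hAuniv (Finset.eq_univ_iff_forall.mpr h)
      have hAsub : A ⊆ univ := Finset.mem_powerset.mp (mem_filter.mp hAmem).1
      have hins : ¬ (hfun (insert k0 A) ≤ N) := by
        intro h
        have hmem' : insert k0 A ∈ Fam :=
          mem_filter.mpr ⟨Finset.mem_powerset.mpr (subset_univ _), h⟩
        have := hAmax _ hmem'
        rw [Finset.card_insert_of_notMem hk0] at this
        omega
      have e1 : ∀ (B : Finset P), hfun B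
          = (if k0 ∈ B then nhi k0 else nlo k0)
            + ∑ k ∈ univ.erase k0, (if k ∈ B then nhi k else nlo k) := by
        intro B
        rw [hfundef]
        exact (Finset.add_sum_erase univ _ (mem_univ k0)).symm
      have e2 : ∑ k ∈ univ.erase k0, (if k ∈ insert k0 A then nhi k else nlo k)
          = ∑ k ∈ univ.erase k0, (if k ∈ A then nhi k else nlo k) := by
        apply Finset.sum_congr rfl
        intro k hk
        have hkne : k ≠ k0 := (Finset.mem_erase.mp hk).1
        simp [Finset.mem_insert, hkne]
      set B' : ℕ := ∑ k ∈ univ.erase k0, (if k ∈ A then nhi k else nlo k) with hB'def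
      have hA_eq : hfun A = nlo k0 + B' := by rw [e1 A, if_neg hk0]
      have hins_eq : hfun (insert k0 A) = nhi k0 + B' := by
        rw [e1 (insert k0 A), if_pos (Finset.mem_insert_self k0 A), e2]
      have hB'N : nlo k0 + B' ≤ N := by rw [← hA_eq]; exact hAle
      have hα : N < nhi k0 + B' := by rw [← hins_eq]; omega
      refine ⟨zs, Y zs, fun k => if k = k0 then N - B' else (if k ∈ A then nhi k else nlo k),
        hzs0, fun k => hYnn zs k, hfeas, ?_, ?_, ?_⟩
      · have h7 : ∑ k ∈ univ.erase k0,
            (if k = k0 then N - B' else (if k ∈ A then nhi k else nlo k)) = B' := by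
          rw [hB'def]
          apply Finset.sum_congr rfl
          intro k hk
          rw [if_neg (Finset.mem_erase.mp hk).1]
        have h6 : (if k0 = k0 then N - B' else (if k0 ∈ A then nhi k0 else nlo k0)) = N - B' :=
          if_pos rfl
        rw [← Finset.add_sum_erase univ _ (mem_univ k0), h6, h7]
        omega
      · intro k hk
        simp only [] at hk
        apply hy0 k
        by_cases hkk : k = k0
        · subst hkk
          rw [if_pos rfl] at hk
          omega
        · rw [if_neg hkk] at hk
          have := hlohi k
          by_cases hkA : k ∈ A
          · simp only [hkA, if_true] at hk; omega
          · simp only [hkA, if_false] at hk; omega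
      · have hsplitf : ∑ k, f k (if k = k0 then N - B' else (if k ∈ A then nhi k else nlo k))
            = f k0 (N - B') + ∑ k ∈ univ.erase k0, f k (if k ∈ A then nhi k else nlo k) := by
          rw [← Finset.add_sum_erase univ _ (mem_univ k0), if_pos rfl]
          congr 1
          apply Finset.sum_congr rfl
          intro k hk
          rw [if_neg (Finset.mem_erase.mp hk).1]
        have hsplitY : (∑ k, Y zs k) = Y zs k0 + ∑ k ∈ univ.erase k0, Y zs k :=
          (Finset.add_sum_erase univ _ (mem_univ k0)).symm
        have hval : ∀ k ∈ univ.erase k0,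
            f k (if k ∈ A then nhi k else nlo k)
              = Y zs k + ((if k ∈ A then nhi k else nlo k) : ℕ) * zs := by
          intro k hk
          by_cases hkA : k ∈ A
          · simp only [hkA, if_true]; have := hhieq k; linarith
          · simp only [hkA, if_false]; have := hloeq k; linarith
        have hsum_erase : ∑ k ∈ univ.erase k0, f k (if k ∈ A then nhi k else nlo k)
            = (∑ k ∈ univ.erase k0, Y zs k) + (B' : ℝ) * zs := by
          rw [Finset.sum_congr rfl hval, Finset.sum_add_distrib]
          congr 1
          rw [hB'def]
          push_cast
          rw [Finset.sum_mul]
        have hYenn : (0:ℝ) ≤ ∑ k ∈ univ.erase k0, Y zs k :=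
          Finset.sum_nonneg fun k _ => hYnn zs k
        rw [hsplitf, hsum_erase, hsplitY]
        by_cases hhalfc : nhi k0 ≤ 2 * (N - B')
        · have h6 : f k0 (nhi k0) ≤ 2 * f k0 (N - B') :=
            hfhalf k0 (N - B') (nhi k0) hhalfc (hhiN k0)
          have h7 := hhieq k0
          have h8 : ((N:ℕ):ℝ) ≤ ((nhi k0:ℕ):ℝ) + 2*(B':ℝ) := by
            have h9 : (N:ℕ) ≤ nhi k0 + 2*B' := by omega
            exact_mod_cast h9
          nlinarith [hzs0]
        · push_neg at hhalfc
          have hN2B : N ≤ 2 * B' := by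
            have := hhiN k0
            omega
          have h6 : f k0 (nlo k0) ≤ f k0 (N - B') := hfmono k0 _ _ (by omega)
          have h7 := hloeq k0
          have h8 : ((N:ℕ):ℝ) ≤ 2*(B':ℝ) := by exact_mod_cast hN2B
          have h9 : (0:ℝ) ≤ (nlo k0 : ℝ) * zs := by positivity
          have h10 := hYnn zs k0
          nlinarith [hzs0]

lemma exists_partition_of_sizes {𝒩 P : Type*} [Fintype 𝒩] [DecidableEq 𝒩] [Fintype P]
    (s : P → ℕ) (hs : ∑ k, s k = Fintype.card 𝒩) :
    ∃ S : P → Finset 𝒩, (∀ k l, k ≠ l → Disjoint (S k) (S l)) ∧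
      Finset.univ.biUnion S = Finset.univ ∧ ∀ k, (S k).card = s k := by
  classical
  set N := Fintype.card 𝒩 with hNdef
  set e := Fintype.equivFin 𝒩 with hedef
  set σ := Fintype.equivFin P with hσdef
  set c : P → ℕ := fun k => ∑ l ∈ univ.filter (fun l => (σ l : ℕ) < (σ k : ℕ)), s l with hcdef
  have key : ∀ a b : ℕ, b ≤ N →
      (univ.filter (fun i : 𝒩 => a ≤ (e i : ℕ) ∧ (e i : ℕ) < b)).card = b - a := by
    intro a b hb
    rw [← Nat.card_Ico a b]
    apply Finset.card_bij (fun i _ => (e i : ℕ))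
    · intro i hi
      simp only [mem_filter, mem_univ, true_and] at hi
      exact Finset.mem_Ico.mpr hi
    · intro i _ j _ h
      exact e.injective (Fin.val_injective h)
    · intro x hx
      have hx2 := Finset.mem_Ico.mp hx
      have hxN : x < N := lt_of_lt_of_le hx2.2 hb
      refine ⟨e.symm ⟨x, hxN⟩, ?_, ?_⟩
      · simp only [mem_filter, mem_univ, true_and, Equiv.apply_symm_apply]
        exact hx2
      · simp only [Equiv.apply_symm_apply]
  set S : P → Finset 𝒩 :=
    fun k => univ.filter (fun i => c k ≤ (e i : ℕ) ∧ (e i : ℕ) < c k + s k) with hSdef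
  have hck : ∀ k, c k + s k ≤ N := by
    intro k
    have h1 : c k + s k = ∑ l ∈ insert k (univ.filter (fun l => (σ l : ℕ) < (σ k : ℕ))), s l := by
      rw [Finset.sum_insert (by simp)]
      simp only [hcdef]
      omega
    rw [h1, ← hs]
    exact Finset.sum_le_sum_of_subset (subset_univ _)
  have hcard : ∀ k, (S k).card = s k := by
    intro k
    rw [hSdef]
    simp only []
    rw [key (c k) (c k + s k) (hck k)]
    omega
  have horder : ∀ k l, (σ k : ℕ) < (σ l : ℕ) → c k + s k ≤ c l := by
    intro k l h
    have h1 : c k + s k = ∑ m ∈ insert k (univ.filter (fun m => (σ m : ℕ) < (σ k : ℕ))), s m := by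
      rw [Finset.sum_insert (by simp)]
      simp only [hcdef]
      omega
    rw [h1, hcdef]
    apply Finset.sum_le_sum_of_subset
    intro m hm
    rcases Finset.mem_insert.mp hm with rfl | hm2
    · simp only [mem_filter, mem_univ, true_and]
      exact h
    · simp only [mem_filter, mem_univ, true_and] at hm2 ⊢
      omega
  have hdisj0 : ∀ k l, (σ k : ℕ) < (σ l : ℕ) → Disjoint (S k) (S l) := by
    intro k l h
    rw [Finset.disjoint_left]
    intro i hik hil
    rw [hSdef] at hik hil
    simp only [mem_filter, mem_univ, true_and] at hik hil
    have := horder k l h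
    omega
  have hdisj : ∀ k l, k ≠ l → Disjoint (S k) (S l) := by
    intro k l hkl
    have hne : (σ k : ℕ) ≠ (σ l : ℕ) := by
      intro h
      exact hkl (σ.injective (Fin.val_injective h))
    rcases lt_or_gt_of_ne hne with h | h
    · exact hdisj0 k l h
    · exact (hdisj0 l k h).symm
  refine ⟨S, hdisj, ?_, hcard⟩
  apply Finset.eq_univ_of_card
  rw [Finset.card_biUnion (fun k _ l _ h => hdisj k l h)]
  rw [← hNdef, ← hs]
  exact Finset.sum_congr rfl fun k _ => hcard k

/-- For every instance with monotone, anonymous, subadditive project valuations there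
exists a `(2,2)`-core stable solution: a stable pair `(S, p̄)` whose payments sum to
exactly twice the social welfare of `S`, with `2·SW(S) ≥ OPT`. -/
theorem stmt6 {𝒩 P : Type*} [Fintype 𝒩] [DecidableEq 𝒩] [Fintype P] [Nonempty P]
    (v : P → Finset 𝒩 → ℝ)
    (hzero : ∀ k, v k ∅ = 0)
    (hnonneg : ∀ k (T : Finset 𝒩), 0 ≤ v k T)
    (hmono : ∀ k (A B : Finset 𝒩), A ⊆ B → v k A ≤ v k B)
    (hanon : ∀ k (A B : Finset 𝒩), A.card = B.card → v k A = v k B)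
    (hsubadd : ∀ k (A B : Finset 𝒩), v k (A ∪ B) ≤ v k A + v k B) :
    ∃ (S : P → Finset 𝒩) (pbar : 𝒩 → ℝ),
      -- S is an allocation
      (∀ k l, k ≠ l → Disjoint (S k) (S l)) ∧
      Finset.univ.biUnion S = Finset.univ ∧
      -- p̄ is a payment vector
      (∀ i, 0 ≤ pbar i) ∧
      -- stability
      (∀ k (T : Finset 𝒩), v k (S k ∪ T) ≤ ∑ i ∈ S k ∪ T, pbar i) ∧
      -- 2-budget balance
      (∑ i, pbar i = 2 * ∑ k, v k (S k)) ∧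
      -- 2-approximation to the optimum welfare
      (∀ S' : P → Finset 𝒩,
        (∀ k l, k ≠ l → Disjoint (S' k) (S' l)) →
        Finset.univ.biUnion S' = Finset.univ →
        ∑ k, v k (S' k) ≤ 2 * ∑ k, v k (S k)) := by
  classical
  by_cases hN0 : Fintype.card 𝒩 = 0
  · -- empty agent set
    have hem : IsEmpty 𝒩 := Fintype.card_eq_zero_iff.mp hN0
    have hall : ∀ T : Finset 𝒩, T = ∅ := fun T => Finset.eq_empty_of_isEmpty T
    refine ⟨fun _ => ∅, fun _ => 0, fun k l _ => by simp, ?_, fun i => le_refl 0, ?_, ?_, ?_⟩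
    · rw [hall (univ.biUnion fun _ => ∅), hall univ]
    · intro k T
      rw [hall (∅ ∪ T)]
      simp [hzero k]
    · simp [hzero]
    · intro S' _ _
      simp [fun k => hall (S' k), hzero]
  · have hN : 1 ≤ Fintype.card 𝒩 := Nat.one_le_iff_ne_zero.mpr hN0
    set N := Fintype.card 𝒩 with hNdef
    set e := Fintype.equivFin 𝒩 with hedef
    set seg : ℕ → Finset 𝒩 := fun n => univ.filter (fun i => (e i : ℕ) < n) with hsegdef
    have hsegcard : ∀ n, n ≤ N → (seg n).card = n := by
      intro n hn
      rw [hsegdef]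
      simp only []
      conv_rhs => rw [← Finset.card_range n]
      apply Finset.card_bij (fun i _ => (e i : ℕ))
      · intro i hi
        simp only [mem_filter, mem_univ, true_and] at hi
        exact Finset.mem_range.mpr hi
      · intro i _ j _ h
        exact e.injective (Fin.val_injective h)
      · intro x hx
        have hxN : x < N := lt_of_lt_of_le (Finset.mem_range.mp hx) hn
        refine ⟨e.symm ⟨x, hxN⟩, ?_, ?_⟩
        · simp only [mem_filter, mem_univ, true_and, Equiv.apply_symm_apply]
          exact Finset.mem_range.mp hx
        · simp only [Equiv.apply_symm_apply]
    set f : P → ℕ → ℝ := fun k n => v k (seg n) with hfdef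
    have hcardle : ∀ A : Finset 𝒩, A.card ≤ N := fun A => by
      rw [hNdef, ← Finset.card_univ]
      exact Finset.card_le_univ A
    have hvf : ∀ k (A : Finset 𝒩), v k A = f k A.card := by
      intro k A
      rw [hfdef]
      exact hanon k A (seg A.card) (hsegcard _ (hcardle A)).symm
    have hf0 : ∀ k, f k 0 = 0 := by
      intro k
      rw [hfdef]
      simp only []
      have : seg 0 = ∅ := by
        rw [hsegdef]
        simp
      rw [this]
      exact hzero k
    have hfnn : ∀ k n, 0 ≤ f k n := fun k n => hnonneg k _
    have hsegmono : ∀ a b, a ≤ b → seg a ⊆ seg b := by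
      intro a b hab
      rw [hsegdef]
      intro i hi
      simp only [mem_filter, mem_univ, true_and] at hi ⊢
      omega
    have hfmono : ∀ k a b, a ≤ b → f k a ≤ f k b := by
      intro k a b hab
      exact hmono k _ _ (hsegmono a b hab)
    have hfhalf : ∀ k t n, n ≤ 2 * t → n ≤ N → f k n ≤ 2 * f k t := by
      intro k t n h2 hn
      by_cases hts : n ≤ t
      · have h3 := hfmono k n t hts
        have h4 := hfnn k t
        linarith
      · push_neg at hts
        have hsub : seg t ⊆ seg n := hsegmono t n hts.le
        have hu : seg t ∪ (seg n \ seg t) = seg n := Finset.union_sdiff_of_subset hsub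
        have h5 := hsubadd k (seg t) (seg n \ seg t)
        rw [hu] at h5
        have hcard2 : (seg n \ seg t).card = n - t := by
          rw [Finset.card_sdiff_of_subset hsub, hsegcard n hn, hsegcard t (le_trans hts.le hn)]
        have hv2 : v k (seg n \ seg t) = f k (n - t) := by
          rw [hvf k _, hcard2]
        have h6 : f k (n - t) ≤ f k t := hfmono k _ _ (by omega)
        have h7 : f k n = v k (seg n) := rfl
        rw [hv2] at h5
        calc f k n ≤ f k t + f k (n - t) := h5
        _ ≤ 2 * f k t := by linarith
    obtain ⟨z, y, s, hz, hynn, hfeas, hssum, hszero, hbudget⟩ :=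
      dual_exists N hN f hf0 hfnn hfmono hfhalf
    obtain ⟨S, hdisj, hcover, hScard⟩ := exists_partition_of_sizes s (by rw [hssum])
    have hSW : ∀ k, v k (S k) = f k (s k) := by
      intro k
      rw [hvf k (S k), hScard k]
    have hkey : (∑ k, y k) + N * z ≤ 2 * ∑ k, v k (S k) := by
      rw [Finset.sum_congr rfl fun k _ => hSW k]
      exact hbudget
    set δ : ℝ := (2 * (∑ k, v k (S k)) - ((∑ k, y k) + N * z)) / N with hδdef
    have hNpos : (0:ℝ) < (N:ℝ) := by exact_mod_cast hN
    have hδnn : 0 ≤ δ := by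
      rw [hδdef]
      apply div_nonneg (by linarith) hNpos.le
    set q : 𝒩 → ℝ := fun i => ∑ k, (if i ∈ S k then y k / (S k).card else 0) with hqdef
    have hqnn : ∀ i, 0 ≤ q i := by
      intro i
      apply Finset.sum_nonneg
      intro k _
      split_ifs
      · exact div_nonneg (hynn k) (Nat.cast_nonneg _)
      · exact le_refl 0
    have hyzeroS : ∀ k, (S k).card = 0 → y k = 0 := by
      intro k hc
      apply hszero
      rw [← hScard k]
      exact hc
    have hinner : ∀ k, ∑ i ∈ S k, (y k / ((S k).card : ℝ)) = y k := by
      intro k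
      rcases Nat.eq_zero_or_pos (S k).card with hc | hc
      · rw [Finset.card_eq_zero.mp hc]
        simp [hyzeroS k hc]
      · rw [Finset.sum_const, nsmul_eq_mul]
        have hne : ((S k).card : ℝ) ≠ 0 := by
          exact_mod_cast hc.ne'
        field_simp
    have hqeq : ∀ k, ∀ i ∈ S k, q i = y k / ((S k).card : ℝ) := by
      intro k i hi
      rw [hqdef]
      simp only []
      rw [Finset.sum_eq_single k]
      · rw [if_pos hi]
      · intro l _ hlk
        rw [if_neg]
        intro hil
        exact (Finset.disjoint_left.mp (hdisj l k hlk) hil) hi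
      · intro h
        exact absurd (mem_univ k) h
    have hqS : ∀ k, ∑ i ∈ S k, q i = y k := by
      intro k
      rw [Finset.sum_congr rfl (fun i hi => hqeq k i hi)]
      exact hinner k
    refine ⟨S, fun i => z + δ + q i, hdisj, hcover, ?_, ?_, ?_, ?_⟩
    · intro i
      have := hqnn i
      dsimp only
      linarith
    · -- stability
      intro k T
      have hAcard : (S k ∪ T).card ≤ N := hcardle _
      have h1 : v k (S k ∪ T) = f k (S k ∪ T).card := hvf k _
      have h2 : f k (S k ∪ T).card ≤ y k + ((S k ∪ T).card : ℝ) * z := hfeas k _ hAcard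
      have h3 : ∑ i ∈ S k ∪ T, (z + δ + q i)
          = ((S k ∪ T).card : ℝ) * (z + δ) + ∑ i ∈ S k ∪ T, q i := by
        rw [Finset.sum_add_distrib, Finset.sum_const, nsmul_eq_mul]
      have h4 : y k ≤ ∑ i ∈ S k ∪ T, q i := by
        rcases Nat.eq_zero_or_pos (S k).card with hc | hc
        · rw [hyzeroS k hc]
          exact Finset.sum_nonneg fun i _ => hqnn i
        · rw [← hqS k]
          exact Finset.sum_le_sum_of_subset_of_nonneg Finset.subset_union_left
            (fun i _ _ => hqnn i)
      have h5 : (0:ℝ) ≤ ((S k ∪ T).card : ℝ) * δ := mul_nonneg (Nat.cast_nonneg _) hδnn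
      rw [h1, h3]
      nlinarith [h2, h4]
    · -- budget balance
      have h1 : ∑ i, (z + δ + q i) = (N:ℝ) * (z + δ) + ∑ i, q i := by
        rw [Finset.sum_add_distrib, Finset.sum_const, Finset.card_univ, nsmul_eq_mul, hNdef]
      have h2 : ∑ i, q i = ∑ k, y k := by
        rw [hqdef]
        simp only []
        rw [Finset.sum_comm]
        apply Finset.sum_congr rfl
        intro k _
        rw [Finset.sum_ite_mem univ (S k) (fun _ => y k / ((S k).card : ℝ)), Finset.univ_inter]
        exact hinner k
      have h3 : (N:ℝ) * δ = 2 * (∑ k, v k (S k)) - ((∑ k, y k) + N * z) := by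
        rw [hδdef]
        field_simp
      rw [h1, h2]
      linarith [h3]
    · -- approximation
      intro S' hd' hc'
      have hcards : ∑ k, (S' k).card = N := by
        rw [← Finset.card_biUnion (fun k _ l _ h => hd' k l h), hc', Finset.card_univ, hNdef]
      have h1 : ∀ k, v k (S' k) ≤ y k + ((S' k).card : ℝ) * z := by
        intro k
        rw [hvf k (S' k)]
        exact hfeas k _ (hcardle _)
      calc ∑ k, v k (S' k) ≤ ∑ k, (y k + ((S' k).card : ℝ) * z) :=
            Finset.sum_le_sum fun k _ => h1 k
        _ = (∑ k, y k) + (N:ℝ) * z := by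
            rw [Finset.sum_add_distrib]
            congr 1
            rw [← Finset.sum_mul]
            congr 1
            exact_mod_cast hcards
        _ ≤ 2 * ∑ k, v k (S k) := hkey
end

section
/- For every instance in which each project valuation v_k is monotone, anonymous, and subadditive (with v_k(∅)=0), there exist an allocation S and a payment vector p̄ such that (S, p̄) is stable, Σ_{i∈𝒩} p̄_i = 2·SW(S), 2·SW(S) ≥ OPT, and in addition the payments are envy-free: for every project k and all agents i, j ∈ S_k, one has p̄_i = p̄_j. -/
open Finset

/-- Choose integers between given bounds with a prescribed sum. -/
lemma aux_select {ι : Type*} [DecidableEq ι] (s : Finset ι) :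
    ∀ (t : ℕ) (lo hi : ι → ℕ), (∀ i ∈ s, lo i ≤ hi i) →
    (∑ i ∈ s, lo i) ≤ t → t ≤ ∑ i ∈ s, hi i →
    ∃ c : ι → ℕ, (∀ i ∈ s, lo i ≤ c i ∧ c i ≤ hi i) ∧ ∑ i ∈ s, c i = t := by
  induction s using Finset.induction_on with
  | empty =>
      intro t lo hi _ h1 h2
      simp only [Finset.sum_empty] at h1 h2
      exact ⟨lo, by simp, by simp; omega⟩
  | insert _ _ ha ih =>
      rename_i a s
      intro t lo hi hlh h1 h2
      rw [Finset.sum_insert ha] at h1 h2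
      set Sh := ∑ i ∈ s, hi i with hSh
      set Sl := ∑ i ∈ s, lo i with hSl
      have hlha : lo a ≤ hi a := hlh a (mem_insert_self a s)
      have hSlSh : Sl ≤ Sh := Finset.sum_le_sum (fun i hi' => hlh i (mem_insert_of_mem hi'))
      obtain ⟨ca, t2, hca1, hca2, hct, ht1, ht2⟩ :
          ∃ ca t2, lo a ≤ ca ∧ ca ≤ hi a ∧ ca + t2 = t ∧ Sl ≤ t2 ∧ t2 ≤ Sh := by
        rcases le_or_gt t (Sh + lo a) with hcase | hcase
        · exact ⟨lo a, t - lo a, le_refl _, hlha, by omega, by omega, by omega⟩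
        · exact ⟨t - Sh, Sh, by omega, by omega, by omega, hSlSh, le_refl _⟩
      obtain ⟨c, hc1, hc2⟩ := ih t2 lo hi (fun i hi' => hlh i (mem_insert_of_mem hi')) ht1 ht2
      refine ⟨fun i => if i = a then ca else c i, ?_, ?_⟩
      · intro i hi'
        rcases mem_insert.mp hi' with rfl | hi''
        · simp [hca1, hca2]
        · have : i ≠ a := fun h => ha (h ▸ hi'')
          simp [this]; exact hc1 i hi''
      · rw [Finset.sum_insert ha]
        rw [if_pos rfl]
        have : ∑ i ∈ s, (if i = a then ca else c i) = ∑ i ∈ s, c i := by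
          apply Finset.sum_congr rfl
          intro i hi'
          have : i ≠ a := fun h => ha (h ▸ hi')
          simp [this]
        rw [this, hc2]; omega

/-- locate x in consecutive intervals of lengths g i -/
lemma aux_interval (g : ℕ → ℕ) : ∀ (M x : ℕ), x < ∑ i ∈ Finset.range M, g i →
    ∃ t < M, (∑ i ∈ Finset.range t, g i) ≤ x ∧ x < (∑ i ∈ Finset.range t, g i) + g t := by
  intro M
  induction M with
  | zero => intro x hx; simp at hx
  | succ M ih =>
      intro x hx
      by_cases h : x < ∑ i ∈ Finset.range M, g i
      · obtain ⟨t, ht, h1, h2⟩ := ih x h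
        exact ⟨t, Nat.lt_succ_of_lt ht, h1, h2⟩
      · refine ⟨M, Nat.lt_succ_self M, by omega, ?_⟩
        rw [Finset.sum_range_succ] at hx
        omega

set_option maxHeartbeats 2000000 in
/-- For every instance with monotone, anonymous, subadditive project valuations there
exists a `(2,2)`-core stable solution whose payments are in addition envy-free: all
agents assigned to the same project receive the same payment. -/
theorem stmt10 {𝒩 P : Type*} [Fintype 𝒩] [DecidableEq 𝒩] [Fintype P] [Nonempty P]
    (v : P → Finset 𝒩 → ℝ)
    (hzero : ∀ k, v k ∅ = 0)
    (hnonneg : ∀ k (T : Finset 𝒩), 0 ≤ v k T)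
    (hmono : ∀ k (A B : Finset 𝒩), A ⊆ B → v k A ≤ v k B)
    (hanon : ∀ k (A B : Finset 𝒩), A.card = B.card → v k A = v k B)
    (hsubadd : ∀ k (A B : Finset 𝒩), v k (A ∪ B) ≤ v k A + v k B) :
    ∃ (S : P → Finset 𝒩) (pbar : 𝒩 → ℝ),
      -- S is an allocation
      (∀ k l, k ≠ l → Disjoint (S k) (S l)) ∧
      Finset.univ.biUnion S = Finset.univ ∧
      -- p̄ is a payment vector
      (∀ i, 0 ≤ pbar i) ∧
      -- stability
      (∀ k (T : Finset 𝒩), v k (S k ∪ T) ≤ ∑ i ∈ S k ∪ T, pbar i) ∧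
      -- 2-budget balance
      (∑ i, pbar i = 2 * ∑ k, v k (S k)) ∧
      -- 2-approximation to the optimum welfare
      (∀ S' : P → Finset 𝒩,
        (∀ k l, k ≠ l → Disjoint (S' k) (S' l)) →
        Finset.univ.biUnion S' = Finset.univ →
        ∑ k, v k (S' k) ≤ 2 * ∑ k, v k (S k)) ∧
      -- envy-freeness
      (∀ k, ∀ i ∈ S k, ∀ j ∈ S k, pbar i = pbar j) := by
  classical
  by_cases hn0 : IsEmpty 𝒩
  · -- trivial case: no agents
    haveI := hn0
    have hA : ∀ A : Finset 𝒩, A = ∅ := fun A => Finset.eq_empty_of_isEmpty A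
    refine ⟨fun _ => ∅, fun _ => 0, ?_, ?_, ?_, ?_, ?_, ?_, ?_⟩
    · intro k l _; simp
    · exact (hA _).trans (hA _).symm
    · intro i; exact le_refl 0
    · intro k T
      show v k (∅ ∪ T) ≤ ∑ i ∈ ∅ ∪ T, (0 : ℝ)
      rw [hA (∅ ∪ T), hzero k]
      simp
    · simp [hzero]
    · intro S' _ _
      have h1 : ∀ k, v k (S' k) = 0 := fun k => by rw [hA (S' k), hzero k]
      simp only [h1, Finset.sum_const_zero]
      have h2 : ∀ k, v k (∅ : Finset 𝒩) = 0 := hzero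
      simp [h2]
    · intro k i hi; simp at hi
  · -- main case
    haveI hNE : Nonempty 𝒩 := not_isEmpty_iff.mp hn0
    set n := Fintype.card 𝒩 with hn
    have hn1 : 1 ≤ n := Fintype.card_pos
    set m := Fintype.card P with hm
    have hm1 : 1 ≤ m := Fintype.card_pos
    set eN := Fintype.equivFin 𝒩 with heN
    set eP := Fintype.equivFin P with heP
    -- canonical interval sets of agents
    set Iset : ℕ → ℕ → Finset 𝒩 :=
      fun a b => Finset.univ.filter (fun x => a ≤ (eN x : ℕ) ∧ (eN x : ℕ) < b) with hIset
    have hImem : ∀ (a b : ℕ) (x : 𝒩), x ∈ Iset a b ↔ a ≤ (eN x : ℕ) ∧ (eN x : ℕ) < b := by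
      intro a b x; simp [hIset]
    have hIcard : ∀ a b : ℕ, b ≤ n → (Iset a b).card = b - a := by
      intro a b hb
      have hinj : Function.Injective (fun x : 𝒩 => (eN x : ℕ)) :=
        fun x y h => eN.injective (Fin.val_injective h)
      rw [← Finset.card_image_of_injective (Iset a b) hinj]
      have himg : (Iset a b).image (fun x : 𝒩 => (eN x : ℕ)) = Finset.Ico a b := by
        ext z
        simp only [Finset.mem_image, Finset.mem_Ico]
        constructor
        · rintro ⟨x, hx, rfl⟩; exact (hImem a b x).mp hx
        · intro hz
          have hzn : z < n := lt_of_lt_of_le hz.2 hb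
          refine ⟨eN.symm ⟨z, hzn⟩, (hImem _ _ _).mpr ?_, ?_⟩ <;> simp [hz.1, hz.2]
      rw [himg, Nat.card_Ico]
    -- the size-based valuation
    set f : P → ℕ → ℝ := fun k j => v k (Iset 0 j) with hf
    have hcardn : ∀ A : Finset 𝒩, A.card ≤ n := by
      intro A; rw [hn]; exact (Finset.card_le_univ A).trans_eq (Finset.card_univ)
    have hvf : ∀ k (A : Finset 𝒩), v k A = f k A.card := by
      intro k A
      apply hanon
      rw [hIcard 0 A.card (hcardn A)]
      omega
    have hf0 : ∀ k, f k 0 = 0 := by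
      intro k
      have h1 : Iset 0 0 = ∅ := by
        ext x; simp [hImem]
      rw [hf]; simp only []
      rw [h1]; exact hzero k
    have hfmono : ∀ k (a b : ℕ), a ≤ b → f k a ≤ f k b := by
      intro k a b hab
      apply hmono
      intro x hx
      rw [hImem] at hx ⊢
      omega
    have hfnn : ∀ k j, 0 ≤ f k j := fun k j => hnonneg _ _
    have hfsub : ∀ k (x y : ℕ), x + y ≤ n → f k (x + y) ≤ f k x + f k y := by
      intro k x y hxy
      have hU : Iset 0 (x + y) = Iset 0 x ∪ Iset x (x + y) := by
        ext z; simp only [Finset.mem_union, hImem]; omega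
      have hcard2 : (Iset x (x + y)).card = y := by rw [hIcard x (x + y) hxy]; omega
      have h1 := hsubadd k (Iset 0 x) (Iset x (x + y))
      rw [← hU] at h1
      have h2' : v k (Iset x (x + y)) = v k (Iset 0 y) :=
        hanon k _ _ (by rw [hcard2, hIcard 0 y (le_trans (by omega) hxy)]; omega)
      show v k (Iset 0 (x + y)) ≤ v k (Iset 0 x) + v k (Iset 0 y)
      calc v k (Iset 0 (x + y)) ≤ v k (Iset 0 x) + v k (Iset x (x + y)) := h1
        _ = v k (Iset 0 x) + v k (Iset 0 y) := by rw [h2']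
    -- argmax machinery
    set val : P → ℕ → ℝ → ℝ := fun k s p => f k s - s * p with hvaldef
    set Am : P → ℝ → Finset ℕ :=
      fun k p => (Finset.range (n+1)).filter
        (fun s => ∀ s' ∈ Finset.range (n+1), val k s' p ≤ val k s p) with hAm
    have hAne : ∀ k p, (Am k p).Nonempty := by
      intro k p
      obtain ⟨b, hb, hmax⟩ := Finset.exists_max_image (Finset.range (n+1))
        (fun s => val k s p) ⟨0, by simp⟩
      refine ⟨b, ?_⟩
      simp only [hAm, Finset.mem_filter]
      exact ⟨hb, hmax⟩
    have hAmem : ∀ k p s, s ∈ Am k p ↔ (s ≤ n ∧ ∀ s' ≤ n, val k s' p ≤ val k s p) := by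
      intro k p s
      simp only [hAm, Finset.mem_filter, Finset.mem_range, Nat.lt_succ_iff]
    set σlo : P → ℝ → ℕ := fun k p => (Am k p).min' (hAne k p) with hσlo
    set σhi : P → ℝ → ℕ := fun k p => (Am k p).max' (hAne k p) with hσhi
    have hσloA : ∀ k p, σlo k p ∈ Am k p := fun k p => Finset.min'_mem _ _
    have hσhiA : ∀ k p, σhi k p ∈ Am k p := fun k p => Finset.max'_mem _ _
    have hAeq : ∀ k p, ∀ s ∈ Am k p, ∀ s' ∈ Am k p, val k s p = val k s' p := by
      intro k p s hs s' hs'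
      rw [hAmem] at hs hs'
      exact le_antisymm (hs'.2 s hs.1) (hs.2 s' hs'.1)
    -- the price grid
    set Q : Finset ℝ := insert 0 ((Finset.univ ×ˢ (Finset.range (n+1) ×ˢ Finset.range (n+1))).image
      (fun q : P × ℕ × ℕ => (f q.1 q.2.2 - f q.1 q.2.1) / ((q.2.2 : ℝ) - q.2.1))) with hQ
    have hQ0 : (0:ℝ) ∈ Q := Finset.mem_insert_self _ _
    have hQmem : ∀ (k : P) (a b : ℕ), a ≤ n → b ≤ n →
        (f k b - f k a) / ((b : ℝ) - a) ∈ Q := by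
      intro k a b ha hb
      apply Finset.mem_insert_of_mem
      apply Finset.mem_image.mpr
      exact ⟨(k, a, b), by simp [Finset.mem_product, Nat.lt_succ_iff, ha, hb], rfl⟩
    have hQnn : ∀ p ∈ Q, (0:ℝ) ≤ p := by
      intro p hp
      rcases Finset.mem_insert.mp hp with h0 | himg
      · exact le_of_eq h0.symm
      · obtain ⟨⟨k, a, b⟩, hmem, rfl⟩ := Finset.mem_image.mp himg
        rcases le_or_gt a b with hab | hab
        · exact div_nonneg (by have := hfmono k a b hab; simp; linarith)
            (by have : (a:ℝ) ≤ b := Nat.cast_le.mpr hab; simp; linarith)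
        · apply div_nonneg_of_nonpos
          · have := hfmono k b a hab.le; simp; linarith
          · have : (b:ℝ) ≤ a := Nat.cast_le.mpr hab.le; simp; linarith
    set D : ℝ → ℕ := fun p => ∑ k, σlo k p with hD
    set Fs : Finset ℝ := Q.filter (fun p => D p ≤ n) with hFs
    have hFne : Fs.Nonempty := by
      have hQne : Q.Nonempty := ⟨0, hQ0⟩
      refine ⟨Q.max' hQne, ?_⟩
      simp only [hFs, Finset.mem_filter]
      refine ⟨Q.max'_mem hQne, ?_⟩
      have h0A : ∀ k, (0:ℕ) ∈ Am k (Q.max' hQne) := by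
        intro k
        rw [hAmem]
        refine ⟨Nat.zero_le n, ?_⟩
        intro s hs
        have hv0 : val k 0 (Q.max' hQne) = 0 := by
          simp only [hvaldef]; rw [hf0]; simp
        rw [hv0]
        simp only [hvaldef]
        rcases Nat.eq_zero_or_pos s with rfl | hs0
        · rw [hf0]; simp
        · have hρ : (f k s - f k 0) / ((s:ℝ) - (0:ℕ)) ∈ Q := hQmem k 0 s (by omega) hs
          have hle := Finset.le_max' Q _ hρ
          have hspos : (0:ℝ) < (s:ℝ) - ((0:ℕ):ℝ) := by
            norm_num; exact_mod_cast hs0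
          have hle2 := (div_le_iff₀ hspos).mp hle
          have h00 : f k 0 = 0 := hf0 k
          push_cast at hle2 ⊢
          nlinarith [hle2, h00]
      have hσ0 : ∀ k, σlo k (Q.max' hQne) = 0 :=
        fun k => Nat.le_zero.mp (Finset.min'_le _ 0 (h0A k))
      simp only [hD, hσ0]
      simp
    set phat : ℝ := Fs.min' hFne with hphat
    have hphatF : phat ∈ Fs := Finset.min'_mem _ _
    have hphatQ : phat ∈ Q := (Finset.mem_filter.mp hphatF).1
    have hphatnn : 0 ≤ phat := hQnn _ hphatQ
    have hDphat : D phat ≤ n := (Finset.mem_filter.mp hphatF).2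
    set y : P → ℝ := fun k => val k (σhi k phat) phat with hy
    have hfley : ∀ k s, s ≤ n → f k s ≤ y k + s * phat := by
      intro k s hs
      have h1 := ((hAmem k phat _).mp (hσhiA k phat)).2 s hs
      simp only [hvaldef] at h1
      simp only [hy, hvaldef]
      linarith
    have hynn : ∀ k, 0 ≤ y k := by
      intro k
      have := hfley k 0 (by omega)
      rw [hf0 k] at this
      simp at this
      linarith
    -- K4: value lower bound below the max maximizer
    have hK4 : ∀ (k : P) (c : ℕ), c ≤ σhi k phat → (c:ℝ) * phat ≤ f k c := by
      intro k c hc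
      have hbn : σhi k phat ≤ n := ((hAmem _ _ _).mp (hσhiA k phat)).1
      have h1 : f k (σhi k phat) ≤ f k c + f k (σhi k phat - c) := by
        have := hfsub k c (σhi k phat - c) (by omega)
        rwa [Nat.add_sub_cancel' hc] at this
      have h2 : f k (σhi k phat - c) ≤ y k + ((σhi k phat - c : ℕ):ℝ) * phat :=
        hfley k _ (by omega)
      have h3 : f k (σhi k phat) = y k + (σhi k phat : ℝ) * phat := by
        simp only [hy, hvaldef]; ring
      have hcast : ((σhi k phat - c : ℕ):ℝ) = (σhi k phat : ℝ) - (c:ℝ) := by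
        exact Nat.cast_sub hc
      rw [hcast] at h2
      nlinarith [h1, h2, h3]
    -- K5: value at least y above the min maximizer
    have hK5 : ∀ (k : P) (c : ℕ), σlo k phat ≤ c → y k ≤ f k c := by
      intro k c hc
      have h1 : val k (σlo k phat) phat = y k := by
        simp only [hy]
        exact hAeq k phat _ (hσloA k phat) _ (hσhiA k phat)
      have h2 : f k (σlo k phat) ≤ f k c := hfmono k _ _ hc
      have h3 : 0 ≤ (σlo k phat : ℝ) * phat := mul_nonneg (Nat.cast_nonneg _) hphatnn
      simp only [hvaldef] at h1
      linarith
    -- K6: total demand at the chosen price covers n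
    have hK6 : n ≤ ∑ k, σhi k phat := by
      rcases eq_or_lt_of_le hphatnn with hp0 | hp0
      · have hnA : ∀ k : P, n ∈ Am k phat := by
          intro k
          rw [hAmem]
          refine ⟨le_refl n, fun s hs => ?_⟩
          simp only [hvaldef, ← hp0, mul_zero, sub_zero]
          exact hfmono k s n hs
        obtain ⟨k0⟩ := (inferInstance : Nonempty P)
        calc n ≤ σhi k0 phat := Finset.le_max' _ _ (hnA k0)
          _ ≤ ∑ k, σhi k phat :=
            Finset.single_le_sum (f := fun k => σhi k phat)
              (fun k _ => Nat.zero_le _) (Finset.mem_univ k0)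
      · set F2 := Q.filter (fun q => q < phat) with hF2
        have hF2ne : F2.Nonempty := ⟨0, by simp only [hF2, Finset.mem_filter]; exact ⟨hQ0, hp0⟩⟩
        have hpmF2 : F2.max' hF2ne ∈ F2 := Finset.max'_mem _ _
        have hpmQ : F2.max' hF2ne ∈ Q := by
          have := hpmF2; simp only [hF2, Finset.mem_filter] at this; exact this.1
        have hpmlt : F2.max' hF2ne < phat := by
          have := hpmF2; simp only [hF2, Finset.mem_filter] at this; exact this.2
        have hpmnn : 0 ≤ F2.max' hF2ne := hQnn _ hpmQ
        have hDpm : n < D (F2.max' hF2ne) := by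
          by_contra hcon
          push_neg at hcon
          have hmem : F2.max' hF2ne ∈ Fs := by
            simp only [hFs, Finset.mem_filter]; exact ⟨hpmQ, hcon⟩
          have hle := Finset.min'_le Fs _ hmem
          rw [← hphat] at hle
          linarith
        have hkey : ∀ k, σlo k (F2.max' hF2ne) ≤ σhi k phat := by
          intro k
          by_contra hcon
          push_neg at hcon
          have haA := hσhiA k phat
          have hbA := hσloA k (F2.max' hF2ne)
          have han : σhi k phat ≤ n := ((hAmem _ _ _).mp haA).1
          have hbn : σlo k (F2.max' hF2ne) ≤ n := ((hAmem _ _ _).mp hbA).1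
          have h1 := ((hAmem _ _ _).mp hbA).2 _ han
          have h2 := ((hAmem _ _ _).mp haA).2 _ hbn
          simp only [hvaldef] at h1 h2
          have hba : (0:ℝ) < (σlo k (F2.max' hF2ne) : ℝ) - (σhi k phat : ℝ) := by
            have : (σhi k phat : ℝ) < (σlo k (F2.max' hF2ne) : ℝ) := Nat.cast_lt.mpr hcon
            linarith
          have hρQ := hQmem k (σhi k phat) (σlo k (F2.max' hF2ne)) han hbn
          have hρ1 : F2.max' hF2ne ≤
              (f k (σlo k (F2.max' hF2ne)) - f k (σhi k phat)) /
                ((σlo k (F2.max' hF2ne) : ℝ) - (σhi k phat : ℝ)) :=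
            (le_div_iff₀ hba).mpr (by nlinarith [h1])
          have hρ2 : (f k (σlo k (F2.max' hF2ne)) - f k (σhi k phat)) /
                ((σlo k (F2.max' hF2ne) : ℝ) - (σhi k phat : ℝ)) ≤ phat :=
            (div_le_iff₀ hba).mpr (by nlinarith [h2])
          rcases eq_or_lt_of_le hρ2 with heq | hlt
          · have hnum := (div_eq_iff (ne_of_gt hba)).mp heq
            have hmemA : σlo k (F2.max' hF2ne) ∈ Am k phat := by
              rw [hAmem]
              refine ⟨hbn, fun s hs => ?_⟩
              have h4 := ((hAmem _ _ _).mp haA).2 s hs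
              simp only [hvaldef] at h4 ⊢
              nlinarith [hnum, h4]
            have hle3 : σlo k (F2.max' hF2ne) ≤ σhi k phat := by
              simp only [hσhi]
              exact Finset.le_max' _ _ hmemA
            omega
          · have hρF2 : (f k (σlo k (F2.max' hF2ne)) - f k (σhi k phat)) /
                ((σlo k (F2.max' hF2ne) : ℝ) - (σhi k phat : ℝ)) ∈ F2 := by
              simp only [hF2, Finset.mem_filter]; exact ⟨hρQ, hlt⟩
            have hρeq := le_antisymm (Finset.le_max' _ _ hρF2) hρ1
            have hnum := (div_eq_iff (ne_of_gt hba)).mp hρeq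
            have hmemA : σhi k phat ∈ Am k (F2.max' hF2ne) := by
              rw [hAmem]
              refine ⟨han, fun s hs => ?_⟩
              have h4 := ((hAmem _ _ _).mp hbA).2 s hs
              simp only [hvaldef] at h4 ⊢
              nlinarith [hnum, h4]
            have hle3 : σlo k (F2.max' hF2ne) ≤ σhi k phat := by
              simp only [hσlo]
              exact Finset.min'_le _ _ hmemA
            omega
        have hle2 : D (F2.max' hF2ne) ≤ ∑ k, σhi k phat := by
          rw [hD]
          exact Finset.sum_le_sum (fun k _ => hkey k)
        omega
    -- select the sizes c k
    have hlohi : ∀ k : P, σlo k phat ≤ σhi k phat :=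
      fun k => Finset.min'_le _ _ (hσhiA k phat)
    obtain ⟨c, hcb, hcsum⟩ := aux_select (Finset.univ : Finset P) n (fun k => σlo k phat)
      (fun k => σhi k phat) (fun k _ => hlohi k) hDphat hK6
    have hcσhi : ∀ k, c k ≤ σhi k phat := fun k => (hcb k (Finset.mem_univ k)).2
    have hcσlo : ∀ k, σlo k phat ≤ c k := fun k => (hcb k (Finset.mem_univ k)).1
    have hcn : ∀ k, c k ≤ n := fun k =>
      (hcσhi k).trans ((hAmem _ _ _).mp (hσhiA k phat)).1
    have hck0 : ∀ k, c k = 0 → y k = 0 := by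
      intro k hck
      have hσ0 : σlo k phat = 0 := by have := hcσlo k; omega
      have h1 : val k (σlo k phat) phat = y k := by
        simp only [hy]
        exact hAeq k phat _ (hσloA k phat) _ (hσhiA k phat)
      rw [hσ0] at h1
      simp only [hvaldef] at h1
      rw [hf0 k] at h1
      simp at h1
      linarith
    -- social welfare and slack
    have hSWp : (n:ℝ) * phat ≤ ∑ k, f k (c k) := by
      have h1 : ∀ k : P, (c k : ℝ) * phat ≤ f k (c k) := fun k => hK4 k (c k) (hcσhi k)
      calc (n:ℝ) * phat = (∑ k, (c k : ℝ)) * phat := by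
            rw [← Nat.cast_sum, hcsum]
        _ = ∑ k, (c k : ℝ) * phat := Finset.sum_mul _ _ _
        _ ≤ ∑ k, f k (c k) := Finset.sum_le_sum (fun k _ => h1 k)
    have hSWy : ∑ k, y k ≤ ∑ k, f k (c k) :=
      Finset.sum_le_sum (fun k _ => hK5 k (c k) (hcσlo k))
    set δ : ℝ := 2 * (∑ k, f k (c k)) - ((n:ℝ) * phat + ∑ k, y k) with hδdef
    have hδ : 0 ≤ δ := by rw [hδdef]; linarith
    obtain ⟨k0, hk0⟩ : ∃ k0 : P, c k0 ≠ 0 := by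
      by_contra hcon
      push_neg at hcon
      have : ∑ k, c k = 0 := Finset.sum_eq_zero (fun k _ => hcon k)
      omega
    -- build the allocation from consecutive intervals
    set g' : ℕ → ℕ := fun i => if h : i < m then c (eP.symm ⟨i, h⟩) else 0 with hg'
    set G : ℕ → ℕ := fun t => ∑ i ∈ Finset.range t, g' i with hG
    have hGm : G m = n := by
      have h1 : ∀ i : Fin m, g' (i : ℕ) = c (eP.symm i) := by
        intro i
        simp only [hg']
        rw [dif_pos i.isLt]
      calc G m = ∑ i ∈ Finset.range m, g' i := rfl
        _ = ∑ i : Fin m, g' (i : ℕ) := (Fin.sum_univ_eq_sum_range _ m).symm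
        _ = ∑ i : Fin m, c (eP.symm i) := Finset.sum_congr rfl (fun i _ => h1 i)
        _ = ∑ k, c k := Equiv.sum_comp eP.symm c
        _ = n := hcsum
    have hGmono : ∀ a b : ℕ, a ≤ b → G a ≤ G b := by
      intro a b hab
      exact Finset.sum_le_sum_of_subset (Finset.range_subset_range.mpr hab)
    have hGstep : ∀ t, G (t + 1) = G t + g' t := by
      intro t; exact Finset.sum_range_succ _ _
    have hgc : ∀ k : P, g' ((eP k : ℕ)) = c k := by
      intro k
      simp only [hg']
      rw [dif_pos (eP k).isLt]
      congr
      · exact Fin.eta _ _ ▸ (Equiv.symm_apply_apply eP k)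
    set S : P → Finset 𝒩 := fun k => Iset (G (eP k)) (G (eP k) + g' (eP k)) with hS
    have hSub : ∀ k : P, G (eP k) + g' (eP k) ≤ n := by
      intro k
      rw [← hGstep]
      rw [← hGm]
      exact hGmono _ _ (eP k).isLt
    have hScard : ∀ k, (S k).card = c k := by
      intro k
      rw [hS]
      simp only []
      rw [hIcard _ _ (hSub k), hgc]
      omega
    have hSdisj : ∀ k l : P, k ≠ l → Disjoint (S k) (S l) := by
      intro k l hkl
      have hePkl : (eP k : ℕ) ≠ (eP l : ℕ) :=
        fun h => hkl (eP.injective (Fin.val_injective h))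
      rw [Finset.disjoint_left]
      intro x hxk hxl
      rw [hS] at hxk hxl
      simp only [hImem] at hxk hxl
      rcases Nat.lt_or_ge (eP k : ℕ) (eP l : ℕ) with hlt | hge
      · have : G ((eP k : ℕ) + 1) ≤ G (eP l) := hGmono _ _ hlt
        rw [hGstep] at this
        omega
      · have hlt' : (eP l : ℕ) < (eP k : ℕ) := by omega
        have : G ((eP l : ℕ) + 1) ≤ G (eP k) := hGmono _ _ hlt'
        rw [hGstep] at this
        omega
    have hScover : Finset.univ.biUnion S = Finset.univ := by
      apply Finset.eq_univ_of_forall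
      intro x
      rw [Finset.mem_biUnion]
      have hx : (eN x : ℕ) < G m := by rw [hGm]; exact (eN x).isLt
      obtain ⟨t, htm, ht1, ht2⟩ := aux_interval g' m (eN x) hx
      refine ⟨eP.symm ⟨t, htm⟩, Finset.mem_univ _, ?_⟩
      rw [hS]
      simp only [hImem]
      rw [Equiv.apply_symm_apply]
      exact ⟨ht1, ht2⟩
    have hvS : ∀ k, v k (S k) = f k (c k) := by
      intro k
      rw [hvf k (S k), hScard k]
    -- payments
    set r : P → ℝ := fun k => if c k = 0 then 0 else
      phat + y k / (c k : ℝ) + (if k = k0 then δ / (c k0 : ℝ) else 0) with hr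
    set pbar : 𝒩 → ℝ := fun i => ∑ k, if i ∈ S k then r k else 0 with hpbardef
    have hpbar : ∀ k, ∀ i ∈ S k, pbar i = r k := by
      intro k i hi
      rw [hpbardef]
      simp only []
      rw [Finset.sum_eq_single_of_mem k (Finset.mem_univ k)]
      · rw [if_pos hi]
      · intro l _ hlk
        rw [if_neg]
        exact fun hil => (Finset.disjoint_left.mp (hSdisj l k hlk)) hil hi
    have hrp : ∀ k, c k ≠ 0 → phat ≤ r k := by
      intro k hck
      rw [hr]
      simp only []
      rw [if_neg hck]
      have h1 : 0 ≤ y k / (c k : ℝ) := div_nonneg (hynn k) (Nat.cast_nonneg _)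
      have h2 : (0:ℝ) ≤ (if k = k0 then δ / (c k0 : ℝ) else 0) := by
        split
        · exact div_nonneg hδ (Nat.cast_nonneg _)
        · exact le_refl 0
      linarith
    have hcknz : ∀ k, ∀ i ∈ S k, c k ≠ 0 := by
      intro k i hi hck
      have h1 := hScard k
      rw [hck, Finset.card_eq_zero] at h1
      rw [h1] at hi
      exact absurd hi (Finset.notMem_empty i)
    have hpbarp : ∀ i : 𝒩, phat ≤ pbar i := by
      intro i
      have hi : i ∈ Finset.univ.biUnion S := by rw [hScover]; exact Finset.mem_univ i
      rw [Finset.mem_biUnion] at hi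
      obtain ⟨k, _, hik⟩ := hi
      rw [hpbar k i hik]
      exact hrp k (hcknz k i hik)
    have hpbar0 : ∀ i, 0 ≤ pbar i := fun i => le_trans hphatnn (hpbarp i)
    have hsumS : ∀ k, ∑ i ∈ S k, pbar i = (c k : ℝ) * r k := by
      intro k
      rw [Finset.sum_congr rfl (fun i hi => hpbar k i hi)]
      rw [Finset.sum_const, hScard k, nsmul_eq_mul]
    have hcr : ∀ k, (c k : ℝ) * r k = (c k : ℝ) * phat + y k + (if k = k0 then δ else 0) := by
      intro k
      by_cases hck : c k = 0
      · rw [hr]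
        simp only []
        rw [if_pos hck, hck, hck0 k hck]
        rw [if_neg (fun h : k = k0 => hk0 (h ▸ hck))]
        simp
      · rw [hr]
        simp only []
        rw [if_neg hck]
        have hcne : ((c k : ℕ) : ℝ) ≠ 0 := Nat.cast_ne_zero.mpr hck
        by_cases hkk0 : k = k0
        · subst hkk0
          rw [if_pos rfl, if_pos rfl]
          field_simp
        · rw [if_neg hkk0, if_neg hkk0]
          field_simp
          ring
    have hSWv : ∑ k, v k (S k) = ∑ k, f k (c k) :=
      Finset.sum_congr rfl (fun k _ => hvS k)
    -- budget
    have hbudget : ∑ i, pbar i = 2 * ∑ k, f k (c k) := by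
      have h1 : ∑ i ∈ Finset.univ.biUnion S, pbar i = ∑ k, ∑ i ∈ S k, pbar i :=
        Finset.sum_biUnion (fun k _ l _ hkl => hSdisj k l hkl)
      rw [hScover] at h1
      rw [h1]
      calc ∑ k, ∑ i ∈ S k, pbar i
          = ∑ k, ((c k : ℝ) * phat + y k + (if k = k0 then δ else 0)) := by
            refine Finset.sum_congr rfl (fun k _ => ?_)
            rw [hsumS k, hcr k]
        _ = (∑ k, (c k : ℝ)) * phat + ∑ k, y k + δ := by
            rw [Finset.sum_add_distrib, Finset.sum_add_distrib,
              Finset.sum_ite_eq' Finset.univ k0 (fun _ => δ), if_pos (Finset.mem_univ k0),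
              Finset.sum_mul]
        _ = (n:ℝ) * phat + ∑ k, y k + δ := by rw [← Nat.cast_sum, hcsum]
        _ = 2 * ∑ k, f k (c k) := by rw [hδdef]; ring
    -- stability
    have hstab : ∀ k (T : Finset 𝒩), v k (S k ∪ T) ≤ ∑ i ∈ S k ∪ T, pbar i := by
      intro k T
      have hUcard : (S k ∪ T).card ≤ n := hcardn _
      have h1 : v k (S k ∪ T) = f k ((S k ∪ T).card) := hvf k _
      have h2 : f k ((S k ∪ T).card) ≤ y k + (((S k ∪ T).card : ℕ) : ℝ) * phat :=
        hfley k _ hUcard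
      have hsplit : S k ∪ T = S k ∪ (T \ S k) := (Finset.union_sdiff_self_eq_union).symm
      have hdisj : Disjoint (S k) (T \ S k) := Finset.disjoint_sdiff
      have hcardU : (S k ∪ T).card = c k + (T \ S k).card := by
        rw [hsplit, Finset.card_union_of_disjoint hdisj, hScard k]
      have h3 : ∑ i ∈ S k ∪ T, pbar i = ∑ i ∈ S k, pbar i + ∑ i ∈ T \ S k, pbar i := by
        rw [hsplit, Finset.sum_union hdisj]
      have h4 : (((T \ S k).card : ℕ) : ℝ) * phat ≤ ∑ i ∈ T \ S k, pbar i := by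
        calc (((T \ S k).card : ℕ) : ℝ) * phat = ∑ _i ∈ T \ S k, phat := by
              rw [Finset.sum_const, nsmul_eq_mul]
          _ ≤ ∑ i ∈ T \ S k, pbar i := Finset.sum_le_sum (fun i _ => hpbarp i)
      have h5 : (c k : ℝ) * phat + y k ≤ ∑ i ∈ S k, pbar i := by
        rw [hsumS k, hcr k]
        have h6 : (0:ℝ) ≤ (if k = k0 then δ else 0) := by
          split
          · exact hδ
          · exact le_refl 0
        linarith
      rw [h1, h3, hcardU]
      rw [hcardU] at h2
      push_cast at h2 ⊢
      linarith
    -- approximation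
    have happrox : ∀ S' : P → Finset 𝒩, (∀ k l, k ≠ l → Disjoint (S' k) (S' l)) →
        Finset.univ.biUnion S' = Finset.univ →
        ∑ k, v k (S' k) ≤ 2 * ∑ k, f k (c k) := by
      intro S' hd hu
      have hcards : ∑ k, (S' k).card = n := by
        have h1 : (Finset.univ.biUnion S').card = ∑ k, (S' k).card :=
          Finset.card_biUnion (fun k _ l _ hkl => hd k l hkl)
        rw [hu, Finset.card_univ] at h1
        omega
      calc ∑ k, v k (S' k) = ∑ k, f k ((S' k).card) :=
            Finset.sum_congr rfl (fun k _ => hvf k _)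
        _ ≤ ∑ k, (y k + (((S' k).card : ℕ) : ℝ) * phat) :=
            Finset.sum_le_sum (fun k _ => hfley k _ (hcardn _))
        _ = ∑ k, y k + (∑ k, (((S' k).card : ℕ) : ℝ)) * phat := by
            rw [Finset.sum_add_distrib, Finset.sum_mul]
        _ = ∑ k, y k + (n:ℝ) * phat := by rw [← Nat.cast_sum, hcards]
        _ ≤ 2 * ∑ k, f k (c k) := by
            have := hδ
            rw [hδdef] at this
            linarith
    refine ⟨S, pbar, hSdisj, hScover, hpbar0, hstab, ?_, ?_, ?_⟩
    · rw [hSWv]; exact hbudget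
    · intro S' hd hu
      rw [hSWv]
      exact happrox S' hd hu
    · intro k i hi j hj
      rw [hpbar k i hi, hpbar k j hj]
end

section
/- Suppose each project valuation v_k is monotone with v_k(∅)=0, and |𝒩| = N ≥ 1. Let X be an allocation, and for each project k let a_k be a nonnegative additive function on 𝒩 with a_k(T) ≤ v_k(T) for all T ⊆ 𝒩 and a_k(X_k) = v_k(X_k). Fix ε > 0 and define payments by p_i = a_k({i}) + (ε/N)·SW(X) for each agent i ∈ X_k. Suppose there exist a project k and a nonempty set T ⊆ 𝒩 ∖ X_k with v_k(X_k ∪ T) − v_k(X_k) > Σ_{i∈T} p_i. Let X' be the allocation obtained from X by moving the agents of T to project k (X'_k = X_k ∪ T and X'_l = X_l ∖ T for l ≠ k). Then SW(X') > (1 + ε/N)·SW(X). -/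
/-!
Each deviating agent `i ∈ T ∩ X l` is paid its XoS price `a l i` plus the markup `μ = (ε/N)·SW(X)`.
Since `a l` is additive, dominated by `v l` and tight at `X l`, removing `T` from project `l` loses at
most `∑ i ∈ X l ∩ T, a l i` of welfare, i.e. at most the prices of the leaving agents. Project `k`
gains more than the total payment of `T`, which is these prices plus `|T|·μ ≥ μ`; so the welfare
rises by more than `μ`.
-/

open Finset Function

theorem Finset.sum_eq_sum_sum_inter_of_subset_biUnion {ι α M : Type*} [Fintype ι]
    [DecidableEq α] [AddCommMonoid M] {X : ι → Finset α} (hdisj : Pairwise (Disjoint on X))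
    {T : Finset α} (hcover : T ⊆ univ.biUnion X) (f : α → M) :
    ∑ i ∈ T, f i = ∑ l, ∑ i ∈ X l ∩ T, f i := by
  have hpart : T = univ.biUnion fun l => X l ∩ T := by
    rw [← biUnion_inter, inter_eq_right.mpr hcover]
  conv_lhs => rw [hpart]
  exact sum_biUnion fun k _ l _ hkl => (hdisj hkl).mono inter_subset_left inter_subset_left

theorem sub_sum_inter_le_of_additive_minorant {α : Type*} [DecidableEq α]
    {v : Finset α → ℝ} {a : α → ℝ} (hale : ∀ T, ∑ i ∈ T, a i ≤ v T) {S : Finset α}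
    (haeq : ∑ i ∈ S, a i = v S) (T : Finset α) :
    v S - ∑ i ∈ S ∩ T, a i ≤ v (S \ T) := by
  have hsplit := sum_inter_add_sum_sdiff S T a
  linarith [hale (S \ T)]

theorem Fintype.sum_ite_eq_sub_add_sum {ι M : Type*} [Fintype ι] [DecidableEq ι]
    [AddCommGroup M] (k : ι) (f g : ι → M) :
    ∑ l, (if l = k then f l else g l) = f k - g k + ∑ l, g l := by
  have hshift : ∀ l, (if l = k then f l else g l) = (if l = k then f k - g k else 0) + g l := by
    intro l
    split_ifs with hl
    · rw [hl, sub_add_cancel]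
    · rw [zero_add]
  simp only [hshift, sum_add_distrib, Fintype.sum_ite_eq']

theorem stmt12_general {𝒩 P : Type*} [Fintype 𝒩] [DecidableEq 𝒩] [Fintype P] [DecidableEq P]
    (v : P → Finset 𝒩 → ℝ)
    (hnonneg : ∀ k (T : Finset 𝒩), 0 ≤ v k T)
    -- X is an allocation
    (X : P → Finset 𝒩)
    (hdisj : ∀ k l, k ≠ l → Disjoint (X k) (X l))
    (hcover : Finset.univ.biUnion X = Finset.univ)
    -- a k is a nonnegative additive function dominated by v k and tight at X k
    (a : P → 𝒩 → ℝ)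
    (hale : ∀ k (T : Finset 𝒩), ∑ i ∈ T, a k i ≤ v k T)
    (haeq : ∀ k, ∑ i ∈ X k, a k i = v k (X k))
    (ε : ℝ) (hε : 0 < ε)
    -- payments: XoS price plus markup
    (p : 𝒩 → ℝ)
    (hp : ∀ k, ∀ i ∈ X k,
      p i = a k i + ε / (Fintype.card 𝒩 : ℝ) * ∑ l, v l (X l))
    -- a strictly profitable deviation of T to project k
    (k : P) (T : Finset 𝒩) (hT : T.Nonempty) (hTX : Disjoint T (X k))
    (hdev : ∑ i ∈ T, p i < v k (X k ∪ T) - v k (X k)) :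
    -- moving T to project k increases welfare by a factor more than 1 + ε/N
    (1 + ε / (Fintype.card 𝒩 : ℝ)) * ∑ l, v l (X l) <
      ∑ l, v l (if l = k then X k ∪ T else X l \ T) := by
  set μ := ε / (Fintype.card 𝒩 : ℝ) * ∑ l, v l (X l)
  have hμ : 0 ≤ μ :=
    mul_nonneg (div_nonneg hε.le (Nat.cast_nonneg _)) (sum_nonneg fun l _ => hnonneg l _)
  have hmove : ∑ l, v l (if l = k then X k ∪ T else X l \ T) =
      v k (X k ∪ T) - v k (X k) + ∑ l, v l (X l \ T) := by
    rw [sum_congr rfl fun l _ => apply_ite (v l) _ _ _, Fintype.sum_ite_eq_sub_add_sum,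
      sdiff_eq_self_of_disjoint hTX.symm]
  have hremove : ∑ l, v l (X l) - ∑ l, ∑ i ∈ X l ∩ T, a l i ≤ ∑ l, v l (X l \ T) := by
    rw [← sum_sub_distrib]
    exact sum_le_sum fun l _ => sub_sum_inter_le_of_additive_minorant (hale l) (haeq l) T
  have hpay : ∑ i ∈ T, p i = ∑ l, ∑ i ∈ X l ∩ T, a l i + T.card * μ := by
    calc ∑ i ∈ T, p i = ∑ i ∈ T, (p i - μ) + T.card * μ := by
          rw [sum_sub_distrib, sum_const, nsmul_eq_mul, sub_add_cancel]
      _ = ∑ l, ∑ i ∈ X l ∩ T, a l i + T.card * μ := by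
          rw [Finset.sum_eq_sum_sum_inter_of_subset_biUnion hdisj (hcover ▸ subset_univ T)]
          congr 1
          refine sum_congr rfl fun l _ => sum_congr rfl fun i hi => ?_
          rw [hp l i (mem_inter.mp hi).1, add_sub_cancel_right]
  have hmarkup : μ ≤ T.card * μ :=
    le_mul_of_one_le_left hμ (Nat.one_le_cast.mpr (card_pos.mpr hT))
  linarith

/-- A profitable best-response move increases the social welfare by at least a factor
`1 + ε/N`, when payments are XoS prices plus an `(ε/N)·SW(X)` markup. -/
theorem stmt12 {𝒩 P : Type*} [Fintype 𝒩] [DecidableEq 𝒩] [Fintype P] [DecidableEq P]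
    (v : P → Finset 𝒩 → ℝ)
    (hzero : ∀ k, v k ∅ = 0)
    (hnonneg : ∀ k (T : Finset 𝒩), 0 ≤ v k T)
    (hmono : ∀ k (A B : Finset 𝒩), A ⊆ B → v k A ≤ v k B)
    (hN : 1 ≤ Fintype.card 𝒩)
    -- X is an allocation
    (X : P → Finset 𝒩)
    (hdisj : ∀ k l, k ≠ l → Disjoint (X k) (X l))
    (hcover : Finset.univ.biUnion X = Finset.univ)
    -- a k is a nonnegative additive function dominated by v k and tight at X k
    (a : P → 𝒩 → ℝ)
    (ha0 : ∀ k i, 0 ≤ a k i)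
    (hale : ∀ k (T : Finset 𝒩), ∑ i ∈ T, a k i ≤ v k T)
    (haeq : ∀ k, ∑ i ∈ X k, a k i = v k (X k))
    (ε : ℝ) (hε : 0 < ε)
    -- payments: XoS price plus markup
    (p : 𝒩 → ℝ)
    (hp : ∀ k, ∀ i ∈ X k,
      p i = a k i + ε / (Fintype.card 𝒩 : ℝ) * ∑ l, v l (X l))
    -- a strictly profitable deviation of T to project k
    (k : P) (T : Finset 𝒩) (hT : T.Nonempty) (hTX : Disjoint T (X k))
    (hdev : ∑ i ∈ T, p i < v k (X k ∪ T) - v k (X k)) :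
    -- moving T to project k increases welfare by a factor more than 1 + ε/N
    (1 + ε / (Fintype.card 𝒩 : ℝ)) * ∑ l, v l (X l) <
      ∑ l, v l (if l = k then X k ∪ T else X l \ T) :=
  stmt12_general v hnonneg X hdisj hcover a hale haeq ε hε p hp k T hT hTX hdev
end

section
/- Suppose each project valuation v_k is monotone with v_k(∅)=0. Let S be an allocation and p a payment vector satisfying: (i) weak no-overbidding, i.e., Σ_{i∈S_k} p_i ≤ v_k(S_k) for every project k; and (ii) the Nash-deviation property, i.e., for every project k and every set T ⊆ 𝒩 ∖ S_k, v_k(S_k ∪ T) − Σ_{i∈T} p_i ≤ v_k(S_k). Then there exists a payment vector p̄ with p̄_i ≥ p_i for all i such that Σ_{i∈S_k} p̄_i = v_k(S_k) for every project k and (S, p̄) is core stable. -/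
/-!
Spread each project's surplus `v k (S k) - ∑ i ∈ S k, p i` (nonnegative by weak no-overbidding)
evenly over its members. Payments only go up, each project is then paid exactly its value, and
budget balance follows by summing over the partition. For stability, a coalition `S k ∪ T`
differs from `S k` by agents outside `S k`; the Nash-deviation property bounds the extra value
they bring by what they were paid under `p`, hence by what they are paid now.
-/

open Finset

theorem Finset.sum_add_div_card {α : Type*} {s : Finset α} (hs : s.Nonempty) (f : α → ℝ) (c : ℝ) :
    ∑ i ∈ s, (f i + c / #s) = ∑ i ∈ s, f i + c := by
  have hcard : (#s : ℝ) ≠ 0 := by exact_mod_cast hs.card_ne_zero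
  rw [sum_add_distrib, sum_const, nsmul_eq_mul, mul_div_cancel₀ c hcard]

theorem Finset.exists_index_of_partition {α ι : Type*} [Fintype α] [Fintype ι] [DecidableEq α]
    {S : ι → Finset α} (hdisj : ∀ k l, k ≠ l → Disjoint (S k) (S l))
    (hcover : univ.biUnion S = univ) :
    ∃ owner : α → ι, ∀ i k, i ∈ S k ↔ owner i = k := by
  have hmem (i : α) : ∃ k, i ∈ S k := by
    simpa using (hcover.symm ▸ mem_univ i : i ∈ univ.biUnion S)
  choose owner howner using hmem
  refine ⟨owner, fun i k => ⟨fun hik => ?_, fun h => h ▸ howner i⟩⟩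
  by_contra hne
  exact disjoint_left.mp (hdisj _ _ hne) (howner i) hik

theorem le_sum_union_of_nash {α : Type*} [DecidableEq α] {w : Finset α → ℝ} {A : Finset α}
    {q q' : α → ℝ} (hle : ∀ i, q i ≤ q' i)
    (hnash : ∀ T, Disjoint A T → w (A ∪ T) - ∑ i ∈ T, q i ≤ w A)
    (hA : ∑ i ∈ A, q' i = w A) (T : Finset α) :
    w (A ∪ T) ≤ ∑ i ∈ A ∪ T, q' i := by
  rw [← union_sdiff_self_eq_union, sum_union disjoint_sdiff, hA]
  have hdev := hnash (T \ A) disjoint_sdiff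
  have hpay : ∑ i ∈ T \ A, q i ≤ ∑ i ∈ T \ A, q' i := sum_le_sum fun i _ => hle i
  linarith

theorem stmt13_general {𝒩 P : Type*} [Fintype 𝒩] [DecidableEq 𝒩] [Fintype P]
    (v : P → Finset 𝒩 → ℝ)
    (hzero : ∀ k, v k ∅ = 0)
    -- S is an allocation
    (S : P → Finset 𝒩)
    (hdisj : ∀ k l, k ≠ l → Disjoint (S k) (S l))
    (hcover : Finset.univ.biUnion S = Finset.univ)
    -- p is a payment vector
    (p : 𝒩 → ℝ) (hp : ∀ i, 0 ≤ p i)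
    -- (i) weak no-overbidding
    (hwnob : ∀ k, ∑ i ∈ S k, p i ≤ v k (S k))
    -- (ii) Nash-deviation property
    (hnash : ∀ k (T : Finset 𝒩), T ⊆ Finset.univ \ S k →
      v k (S k ∪ T) - ∑ i ∈ T, p i ≤ v k (S k)) :
    ∃ pbar : 𝒩 → ℝ,
      (∀ i, p i ≤ pbar i) ∧
      (∀ i, 0 ≤ pbar i) ∧
      -- payments on each project sum exactly to its value
      (∀ k, ∑ i ∈ S k, pbar i = v k (S k)) ∧
      -- stability
      (∀ k (T : Finset 𝒩), v k (S k ∪ T) ≤ ∑ i ∈ S k ∪ T, pbar i) ∧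
      -- budget balance
      (∑ i, pbar i = ∑ k, v k (S k)) := by
  obtain ⟨owner, howner⟩ := exists_index_of_partition hdisj hcover
  set surplus : P → ℝ := fun k => v k (S k) - ∑ i ∈ S k, p i
  set pbar : 𝒩 → ℝ := fun i => p i + surplus (owner i) / #(S (owner i))
  have hle (i : 𝒩) : p i ≤ pbar i :=
    le_add_of_nonneg_right (div_nonneg (sub_nonneg.mpr (hwnob _)) (Nat.cast_nonneg _))
  have hexact (k : P) : ∑ i ∈ S k, pbar i = v k (S k) := by
    rcases (S k).eq_empty_or_nonempty with hempty | hne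
    · simp [hempty, hzero]
    · have hpaid : ∀ i ∈ S k, pbar i = p i + surplus k / #(S k) := fun i hi => by
        simp only [pbar, (howner i k).mp hi]
      rw [sum_congr rfl hpaid, sum_add_div_card hne]
      ring
  refine ⟨pbar, hle, fun i => (hp i).trans (hle i), hexact, fun k => ?_, ?_⟩
  · exact le_sum_union_of_nash hle
      (fun T hT => hnash k T (subset_sdiff.mpr ⟨subset_univ T, hT.symm⟩)) (hexact k)
  · have hpd : ((univ : Finset P) : Set P).PairwiseDisjoint S := fun k _ l _ hkl => hdisj k l hkl
    rw [← hcover, sum_biUnion hpd]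
    exact sum_congr rfl fun k _ => hexact k

/-- From a weakly no-overbidding payment vector satisfying the Nash-deviation property,
one can raise the payments so that each project's payments sum exactly to its value and
the resulting solution is core stable. -/
theorem stmt13 {𝒩 P : Type*} [Fintype 𝒩] [DecidableEq 𝒩] [Fintype P]
    (v : P → Finset 𝒩 → ℝ)
    (hzero : ∀ k, v k ∅ = 0)
    (hnonneg : ∀ k (T : Finset 𝒩), 0 ≤ v k T)
    (hmono : ∀ k (A B : Finset 𝒩), A ⊆ B → v k A ≤ v k B)
    -- S is an allocation
    (S : P → Finset 𝒩)
    (hdisj : ∀ k l, k ≠ l → Disjoint (S k) (S l))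
    (hcover : Finset.univ.biUnion S = Finset.univ)
    -- p is a payment vector
    (p : 𝒩 → ℝ) (hp : ∀ i, 0 ≤ p i)
    -- (i) weak no-overbidding
    (hwnob : ∀ k, ∑ i ∈ S k, p i ≤ v k (S k))
    -- (ii) Nash-deviation property
    (hnash : ∀ k (T : Finset 𝒩), T ⊆ Finset.univ \ S k →
      v k (S k ∪ T) - ∑ i ∈ T, p i ≤ v k (S k)) :
    ∃ pbar : 𝒩 → ℝ,
      (∀ i, p i ≤ pbar i) ∧
      (∀ i, 0 ≤ pbar i) ∧
      -- payments on each project sum exactly to its value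
      (∀ k, ∑ i ∈ S k, pbar i = v k (S k)) ∧
      -- stability
      (∀ k (T : Finset 𝒩), v k (S k ∪ T) ≤ ∑ i ∈ S k ∪ T, pbar i) ∧
      -- budget balance
      (∑ i, pbar i = ∑ k, v k (S k)) :=
  stmt13_general v hzero S hdisj hcover p hp hwnob hnash
end

section
/- Let 𝒩 be a finite set and let v : Finset 𝒩 → ℝ be monotone and submodular with v(∅)=0. Let S ⊆ 𝒩 be a finite set equipped with a linear order ≺, and for each i ∈ S define a(i) = v(P_i ∪ {i}) − v(P_i), where P_i = { j ∈ S : j ≺ i }. Then a(i) ≥ 0 for all i ∈ S, Σ_{i∈S} a(i) = v(S), and for every T ⊆ S one has Σ_{i∈T} a(i) ≤ v(T). -/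
/-!
Ordering `S` and adding its elements one at a time, the marginal values telescope to `v S`.
For `T ⊆ S`, the predecessors of `i` in `T` are among those in `S`, so by submodularity the
marginal value of `i` over its `S`-predecessors is at most that over its `T`-predecessors;
the latter telescope to `v T`.
-/

open Finset

section Telescoping

variable {α G : Type*} [LinearOrder α] [AddCommGroup G]

lemma filter_lt_insert_of_forall_lt {s : Finset α} {a b : α} (h : ∀ x ∈ s, x < a)
    (hb : b ∈ insert a s) : (insert a s).filter (· < b) = s.filter (· < b) := by
  rw [filter_insert, if_neg]
  rcases mem_insert.mp hb with rfl | hbs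
  · exact lt_irrefl b
  · exact (h b hbs).not_gt

theorem sum_sub_filter_lt_eq (v : Finset α → G) (T : Finset α) :
    ∑ i ∈ T, (v (insert i (T.filter (· < i))) - v (T.filter (· < i))) = v T - v ∅ := by
  induction T using Finset.induction_on_max with
  | empty => simp
  | insert a s hlt ih =>
    have hsum : ∑ i ∈ s, (v (insert i ((insert a s).filter (· < i))) -
        v ((insert a s).filter (· < i))) = v s - v ∅ := by
      rw [← ih]
      refine sum_congr rfl fun i hi => ?_
      rw [filter_lt_insert_of_forall_lt hlt (mem_insert_of_mem hi)]
    have hpred : (insert a s).filter (· < a) = s := by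
      rw [filter_lt_insert_of_forall_lt hlt (mem_insert_self a s), filter_true_of_mem hlt]
    rw [sum_insert fun has => lt_irrefl a (hlt a has), hsum, hpred]
    abel

end Telescoping

theorem stmt14_general {𝒩 : Type*} [LinearOrder 𝒩]
    (v : Finset 𝒩 → ℝ)
    (hzero : v ∅ = 0)
    (hmono : ∀ A B : Finset 𝒩, A ⊆ B → v A ≤ v B)
    (hsubmod : ∀ (A B : Finset 𝒩) (i : 𝒩), A ⊆ B →
      v (insert i B) - v B ≤ v (insert i A) - v A)
    (S : Finset 𝒩)
    (a : 𝒩 → ℝ)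
    -- a i is the marginal value of i over its predecessors in S
    (ha : ∀ i ∈ S,
      a i = v (insert i (S.filter (fun j => j < i))) - v (S.filter (fun j => j < i))) :
    (∀ i ∈ S, 0 ≤ a i) ∧
    (∑ i ∈ S, a i = v S) ∧
    (∀ T ⊆ S, ∑ i ∈ T, a i ≤ v T) := by
  refine ⟨fun i hi => ?_, ?_, fun T hT => ?_⟩
  · rw [ha i hi, sub_nonneg]
    exact hmono _ _ (subset_insert _ _)
  · rw [sum_congr rfl ha, sum_sub_filter_lt_eq, hzero, sub_zero]
  · calc ∑ i ∈ T, a i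
        ≤ ∑ i ∈ T, (v (insert i (T.filter (· < i))) - v (T.filter (· < i))) :=
          sum_le_sum fun i hi => (ha i (hT hi)).trans_le <|
            hsubmod _ _ i (filter_subset_filter _ hT)
      _ = v T := by rw [sum_sub_filter_lt_eq, hzero, sub_zero]

/-- For a monotone submodular valuation `v` with `v ∅ = 0`, the marginal values along a
linear order of `S` are nonnegative, sum to `v(S)`, and for every `T ⊆ S` their sum over
`T` is at most `v(T)`. -/
theorem stmt14 {𝒩 : Type*} [Fintype 𝒩] [LinearOrder 𝒩]
    (v : Finset 𝒩 → ℝ)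
    (hzero : v ∅ = 0)
    (hnonneg : ∀ T : Finset 𝒩, 0 ≤ v T)
    (hmono : ∀ A B : Finset 𝒩, A ⊆ B → v A ≤ v B)
    (hsubmod : ∀ (A B : Finset 𝒩) (i : 𝒩), A ⊆ B →
      v (insert i B) - v B ≤ v (insert i A) - v A)
    (S : Finset 𝒩)
    (a : 𝒩 → ℝ)
    -- a i is the marginal value of i over its predecessors in S
    (ha : ∀ i ∈ S,
      a i = v (insert i (S.filter (fun j => j < i))) - v (S.filter (fun j => j < i))) :
    (∀ i ∈ S, 0 ≤ a i) ∧
    (∑ i ∈ S, a i = v S) ∧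
    (∀ T ⊆ S, ∑ i ∈ T, a i ≤ v T) :=
  stmt14_general v hzero hmono hsubmod S a ha
end

section
/- Let 𝒩 be a finite set and let v : Finset 𝒩 → ℝ be subadditive with v ≥ 0. Let p* : 𝒩 → ℝ with p* ≥ 0 and z ≥ 0 satisfy the dual feasibility condition Σ_{i∈T} p*_i + z ≥ v(T) for every T ⊆ 𝒩. Let A ⊆ 𝒩 be nonempty and partitioned as A = A⁺ ⊔ A⁻, and let (w_i)_{i∈A⁻} be reals with w_i > p*_i + z/|A| for every i ∈ A⁻. If v(A⁺) + Σ_{i∈A⁻} w_i < v(A)/2, then |A⁺| > |A⁻|. -/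
/-! If `|A⁻| ≥ |A⁺|`, then `A⁻` holds at least half of `A`, so the `w`-weights on `A⁻`
exceed `Σ_{A⁻} p* + z/2`. Subadditivity and dual feasibility (applied to `A⁻`) give
`v(A) ≤ v(A⁺) + Σ_{A⁻} p* + z`, and halving this, with `v(A⁺), Σ p* ≥ 0`, yields
`v(A)/2 ≤ v(A⁺) + Σ_{A⁻} w`, contradicting the hypothesis. -/

open Finset

section

variable {ι : Type*}

theorem le_add_sum_add_of_subadditive [DecidableEq ι] (v : Finset ι → ℝ)
    (hsubadd : ∀ A B : Finset ι, v (A ∪ B) ≤ v A + v B) (p : ι → ℝ) (z : ℝ)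
    (hdual : ∀ T : Finset ι, v T ≤ ∑ i ∈ T, p i + z) (s t : Finset ι) :
    v (s ∪ t) ≤ v s + (∑ i ∈ t, p i + z) :=
  (hsubadd s t).trans (add_le_add_right (hdual t) _)

theorem sum_add_half_le_sum_of_le_two_mul_card (t : Finset ι) (p w : ι → ℝ) {z n : ℝ}
    (hz : 0 ≤ z) (hn : 0 < n) (hcard : n ≤ 2 * #t) (hw : ∀ i ∈ t, p i + z / n ≤ w i) :
    ∑ i ∈ t, p i + z / 2 ≤ ∑ i ∈ t, w i := by
  have hhalf : z / 2 ≤ #t * (z / n) := by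
    rw [mul_div_assoc', div_le_div_iff₀ two_pos hn]
    nlinarith
  calc ∑ i ∈ t, p i + z / 2
      ≤ ∑ i ∈ t, p i + #t * (z / n) := by gcongr
    _ = ∑ i ∈ t, (p i + z / n) := by rw [sum_add_distrib, sum_const, nsmul_eq_mul]
    _ ≤ ∑ i ∈ t, w i := sum_le_sum hw
end

theorem stmt15_general {𝒩 : Type*} [DecidableEq 𝒩]
    (v : Finset 𝒩 → ℝ)
    (hnonneg : ∀ T : Finset 𝒩, 0 ≤ v T)
    (hsubadd : ∀ A B : Finset 𝒩, v (A ∪ B) ≤ v A + v B)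
    (pstar : 𝒩 → ℝ) (hpstar : ∀ i, 0 ≤ pstar i)
    (z : ℝ) (hz : 0 ≤ z)
    (hdual : ∀ T : Finset 𝒩, v T ≤ ∑ i ∈ T, pstar i + z)
    (A Aplus Aminus : Finset 𝒩)
    (hA : A.Nonempty)
    (hunion : Aplus ∪ Aminus = A)
    (hdisj : Disjoint Aplus Aminus)
    (w : 𝒩 → ℝ)
    (hw : ∀ i ∈ Aminus, pstar i + z / (A.card : ℝ) < w i)
    (h : v Aplus + ∑ i ∈ Aminus, w i < v A / 2) :
    Aminus.card < Aplus.card := by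
  by_contra! hle
  have hcard : (#A : ℝ) ≤ 2 * #Aminus := by
    rw [← hunion, card_union_of_disjoint hdisj]
    exact_mod_cast (by omega)
  have hweights := sum_add_half_le_sum_of_le_two_mul_card Aminus pstar w hz
    (by exact_mod_cast hA.card_pos) hcard fun i hi => (hw i hi).le
  have hvA := hunion ▸ le_add_sum_add_of_subadditive v hsubadd pstar z hdual Aplus Aminus
  have hpsum : 0 ≤ ∑ i ∈ Aminus, pstar i := sum_nonneg fun i _ => hpstar i
  linarith [hnonneg Aplus]

/-- Abstract form of the "half the agents remain" lemma for bad projects: if `v` is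
subadditive, `(p*, z)` is dual feasible, `A = A⁺ ⊔ A⁻` is nonempty, every `i ∈ A⁻` has
`w i > p*_i + z/|A|`, and `v(A⁺) + Σ_{i∈A⁻} w_i < v(A)/2`, then `|A⁺| > |A⁻|`. -/
theorem stmt15 {𝒩 : Type*} [Fintype 𝒩] [DecidableEq 𝒩]
    (v : Finset 𝒩 → ℝ)
    (hnonneg : ∀ T : Finset 𝒩, 0 ≤ v T)
    (hsubadd : ∀ A B : Finset 𝒩, v (A ∪ B) ≤ v A + v B)
    (pstar : 𝒩 → ℝ) (hpstar : ∀ i, 0 ≤ pstar i)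
    (z : ℝ) (hz : 0 ≤ z)
    (hdual : ∀ T : Finset 𝒩, v T ≤ ∑ i ∈ T, pstar i + z)
    (A Aplus Aminus : Finset 𝒩)
    (hA : A.Nonempty)
    (hunion : Aplus ∪ Aminus = A)
    (hdisj : Disjoint Aplus Aminus)
    (w : 𝒩 → ℝ)
    (hw : ∀ i ∈ Aminus, pstar i + z / (A.card : ℝ) < w i)
    (h : v Aplus + ∑ i ∈ Aminus, w i < v A / 2) :
    Aminus.card < Aplus.card :=
  stmt15_general v hnonneg hsubadd pstar hpstar z hz hdual A Aplus Aminus hA hunion hdisj w hw h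
end
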